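/- arXiv:2104.02250 — 5 statements merged into one kernel-verified Lean document; each statement's English description precedes it below -/
import Mathlib

section
/- The function φ attains a finite global minimum value α* on ℝ at a unique point η* ∈ ℝ; moreover φ is strictly decreasing on (−∞, η*] and strictly increasing on [η*, ∞). Consequently, for every α < α* the equation φ(η) = α has no solution η ∈ ℝ; for α = α* it has the unique solution η = η*; and for every α > α* it has exactly two solutions η₂(α) < η* < η₁(α). -/
/-!
Fix `η₁ < η₂ < η₃` and put `c = φ(η₂)`; `c > 4` because `1 − 4 z²(1 − z²) = (1 − 2z²)² ≥ 0`.
Hence `1 − c z²(1 − z²) = c (z² − A)(z² − B)` for real `A`, `B`, and `φ(η) − c` has the sign of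
`J(η) = ∫₀¹ (z² − A)(z² − B) e^{η z²} dz`, which vanishes at `η₂`. Multiplying by `e^{−Bη}` and
differentiating removes the root `B`; doing the same with `A` leaves
`e^{−Aη} ∫₀¹ (z² − A)²(z² − B)² e^{η z²} dz > 0`. So the derivative of `e^{−Bη} J(η)` changes
sign at most once, from `−` to `+`, and this function, hence also `φ`, is strictly quasiconvex:
`φ(η₂) < max (φ(η₁), φ(η₃))`. As `η → ±∞` the mass of `e^{η z²}` concentrates at an endpoint,
where the weight `z²(1 − z²)` vanishes, so `φ → ∞` at both ends. A continuous, coercive, strictly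
quasiconvex function has a unique minimiser, is strictly monotone on either side of it, and by
the intermediate value theorem takes every larger value exactly twice.
-/

open MeasureTheory Real

noncomputable section

/-- `φ(η) = (∫₀¹ e^{η z²} dz) / (∫₀¹ z² (1 − z²) e^{η z²} dz)`. -/
noncomputable def phi (η : ℝ) : ℝ :=
  (∫ z in (0:ℝ)..1, Real.exp (η * z ^ 2)) /
    (∫ z in (0:ℝ)..1, z ^ 2 * (1 - z ^ 2) * Real.exp (η * z ^ 2))

open Set Filter Topology intervalIntegral

def StrictQuasiconvex (f : ℝ → ℝ) : Prop :=
  ∀ ⦃x y z : ℝ⦄, x < y → y < z → f y < max (f x) (f z)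

theorem strictQuasiconvex_of_hasDerivAt {F F' : ℝ → ℝ} (hF : ∀ x, HasDerivAt F (F' x) x)
    (hF' : ∀ ⦃x y⦄, x < y → 0 ≤ F' x → 0 < F' y) : StrictQuasiconvex F := by
  intro x y z hxy hyz
  have hFc : ContinuousOn F univ := fun t _ => (hF t).continuousAt.continuousWithinAt
  rcases le_or_gt 0 (F' y) with hy | hy
  · refine lt_max_of_lt_right <| strictMonoOn_of_hasDerivWithinAt_pos (convex_Icc y z)
      (hFc.mono (subset_univ _)) (fun t _ => (hF t).hasDerivWithinAt) (fun t ht => ?_)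
      (left_mem_Icc.2 hyz.le) (right_mem_Icc.2 hyz.le) hyz
    rw [interior_Icc] at ht
    exact hF' ht.1 hy
  · refine lt_max_of_lt_left <| strictAntiOn_of_hasDerivWithinAt_neg (convex_Icc x y)
      (hFc.mono (subset_univ _)) (fun t _ => (hF t).hasDerivWithinAt) (fun t ht => ?_)
      (left_mem_Icc.2 hxy.le) (right_mem_Icc.2 hxy.le) hxy
    rw [interior_Icc] at ht
    exact not_le.1 fun h => hy.not_ge (hF' ht.2 h).le

namespace StrictQuasiconvex

variable {f : ℝ → ℝ} {x₀ : ℝ}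

theorem lt_of_forall_le (hq : StrictQuasiconvex f) (hmin : ∀ y, f x₀ ≤ f y) ⦃x : ℝ⦄
    (hx : x ≠ x₀) : f x₀ < f x := by
  rcases hx.lt_or_gt with h | h
  · rcases lt_max_iff.1 (hq (left_lt_add_div_two.2 h) (add_div_two_lt_right.2 h)) with h' | h'
    · exact (hmin _).trans_lt h'
    · exact absurd h' (hmin _).not_gt
  · rcases lt_max_iff.1 (hq (left_lt_add_div_two.2 h) (add_div_two_lt_right.2 h)) with h' | h'
    · exact absurd h' (hmin _).not_gt
    · exact (hmin _).trans_lt h'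

theorem strictAntiOn_Iic (hq : StrictQuasiconvex f) (hmin : ∀ y, f x₀ ≤ f y) :
    StrictAntiOn f (Iic x₀) := by
  intro x _ y hy hxy
  rcases (mem_Iic.1 hy).eq_or_lt with rfl | hy
  · exact hq.lt_of_forall_le hmin hxy.ne
  · exact (lt_max_iff.1 (hq hxy hy)).resolve_right (hmin _).not_gt

theorem strictMonoOn_Ici (hq : StrictQuasiconvex f) (hmin : ∀ y, f x₀ ≤ f y) :
    StrictMonoOn f (Ici x₀) := by
  intro x hx y _ hxy
  rcases (mem_Ici.1 hx).eq_or_lt with rfl | hx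
  · exact hq.lt_of_forall_le hmin hxy.ne'
  · exact (lt_max_iff.1 (hq hx hxy)).resolve_left (hmin _).not_gt

end StrictQuasiconvex

theorem exists_gt_eq_of_tendsto_atTop {f : ℝ → ℝ} (hf : Continuous f)
    (htop : Tendsto f atTop atTop) {x₀ α : ℝ} (hα : f x₀ < α) : ∃ x, x₀ < x ∧ f x = α := by
  obtain ⟨X, hX, hx₀X⟩ := ((htop.eventually_gt_atTop α).and (eventually_ge_atTop x₀)).exists
  obtain ⟨x, hx, rfl⟩ := intermediate_value_Icc hx₀X hf.continuousOn ⟨hα.le, hX.le⟩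
  exact ⟨x, hx.1.lt_of_ne (by rintro rfl; exact hα.false), rfl⟩

theorem exists_lt_eq_of_tendsto_atBot {f : ℝ → ℝ} (hf : Continuous f)
    (hbot : Tendsto f atBot atTop) {x₀ α : ℝ} (hα : f x₀ < α) : ∃ x, x < x₀ ∧ f x = α := by
  obtain ⟨X, hX, hXx₀⟩ := ((hbot.eventually_gt_atTop α).and (eventually_le_atBot x₀)).exists
  obtain ⟨x, hx, rfl⟩ := intermediate_value_Icc' hXx₀ hf.continuousOn ⟨hα.le, hX.le⟩
  exact ⟨x, hx.2.lt_of_ne (by rintro rfl; exact hα.false), rfl⟩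

theorem mul_le_integral_of_forall_le {f : ℝ → ℝ} {a b m : ℝ} (hab : a ≤ b)
    (hf : IntervalIntegrable f volume a b) (h : ∀ z ∈ Icc a b, m ≤ f z) :
    (b - a) * m ≤ ∫ z in a..b, f z := by
  simpa using integral_mono_on hab intervalIntegrable_const hf h

def sqLaplace (g : ℝ → ℝ) (η : ℝ) : ℝ :=
  ∫ z in (0:ℝ)..1, g z * exp (η * z ^ 2)

section sqLaplace

variable {g h : ℝ → ℝ}

theorem intervalIntegrable_mul_exp_sq (hg : Continuous g) (η a b : ℝ) :
    IntervalIntegrable (fun z => g z * exp (η * z ^ 2)) volume a b :=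
  (by fun_prop : Continuous fun z => g z * exp (η * z ^ 2)).intervalIntegrable a b

theorem sqLaplace_sub (hg : Continuous g) (hh : Continuous h) (η : ℝ) :
    sqLaplace (fun z => g z - h z) η = sqLaplace g η - sqLaplace h η := by
  simp only [sqLaplace, sub_mul]
  exact integral_sub (intervalIntegrable_mul_exp_sq hg η 0 1)
    (intervalIntegrable_mul_exp_sq hh η 0 1)

theorem sqLaplace_const_mul (c : ℝ) (g : ℝ → ℝ) (η : ℝ) :
    sqLaplace (fun z => c * g z) η = c * sqLaplace g η := by
  simp only [sqLaplace, mul_assoc]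
  exact integral_const_mul c _

theorem sqLaplace_eq_add_add (hg : Continuous g) (η p q : ℝ) :
    sqLaplace g η = (∫ z in (0:ℝ)..p, g z * exp (η * z ^ 2)) +
      (∫ z in p..q, g z * exp (η * z ^ 2)) + ∫ z in q..(1:ℝ), g z * exp (η * z ^ 2) := by
  simp only [sqLaplace, integral_add_adjacent_intervals (intervalIntegrable_mul_exp_sq hg η _ _)
    (intervalIntegrable_mul_exp_sq hg η _ _)]

theorem sqLaplace_pos (hg : Continuous g) (hg₀ : ∀ z ∈ Icc (0:ℝ) 1, 0 ≤ g z)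
    (hpos : ∃ z ∈ Icc (0:ℝ) 1, 0 < g z) (η : ℝ) : 0 < sqLaplace g η := by
  obtain ⟨z, hz, hgz⟩ := hpos
  exact integral_pos zero_lt_one (by fun_prop)
    (fun t ht => mul_nonneg (hg₀ t (Ioc_subset_Icc_self ht)) (exp_pos _).le)
    ⟨z, hz, mul_pos hgz (exp_pos _)⟩

theorem hasDerivAt_sqLaplace (hg : Continuous g) (η : ℝ) :
    HasDerivAt (sqLaplace g) (sqLaplace (fun z => z ^ 2 * g z) η) η := by
  obtain ⟨C, hC⟩ := ((isCompact_closedBall η 1).prod (isCompact_Icc (a := (0:ℝ)) (b := 1)))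
    |>.exists_bound_of_continuousOn
      (f := fun p : ℝ × ℝ => p.2 ^ 2 * g p.2 * exp (p.1 * p.2 ^ 2)) (by fun_prop)
  have hderiv := intervalIntegral.hasDerivAt_integral_of_dominated_loc_of_deriv_le
    (μ := volume) (a := 0) (b := 1)
    (F := fun x z => g z * exp (x * z ^ 2)) (F' := fun x z => z ^ 2 * g z * exp (x * z ^ 2))
    (bound := fun _ => C) (Metric.ball_mem_nhds η one_pos)
    (.of_forall fun x => (intervalIntegrable_mul_exp_sq hg x 0 1).def'.aestronglyMeasurable)
    (intervalIntegrable_mul_exp_sq hg η 0 1)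
    (by fun_prop : Continuous fun z => z ^ 2 * g z * exp (η * z ^ 2)).aestronglyMeasurable
    (.of_forall fun z hz x hx => hC (x, z) ⟨Metric.ball_subset_closedBall hx,
      Ioc_subset_Icc_self (by rwa [uIoc_of_le zero_le_one] at hz)⟩)
    intervalIntegrable_const
    (.of_forall fun z _ x _ => by
      simpa [mul_comm, mul_left_comm, mul_assoc] using
        ((hasDerivAt_mul_const (z ^ 2)).exp).const_mul (g z))
  exact hderiv.2

theorem continuous_sqLaplace (hg : Continuous g) : Continuous (sqLaplace g) :=
  continuous_iff_continuousAt.2 fun η => (hasDerivAt_sqLaplace hg η).continuousAt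

theorem hasDerivAt_exp_mul_sqLaplace (hg : Continuous g) (A η : ℝ) :
    HasDerivAt (fun η => exp (-A * η) * sqLaplace g η)
      (exp (-A * η) * sqLaplace (fun z => (z ^ 2 - A) * g z) η) η := by
  refine (((hasDerivAt_id η).const_mul (-A)).exp.mul (hasDerivAt_sqLaplace hg η)).congr_deriv ?_
  simp only [sub_mul, sqLaplace_sub (by fun_prop : Continuous fun z => z ^ 2 * g z)
    (by fun_prop : Continuous fun z => A * g z), sqLaplace_const_mul, id]
  ring

theorem eventually_atTop_sqLaplace_pos (hg : Continuous g) (hg₁ : 0 < g 1) :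
    ∀ᶠ η in atTop, 0 < sqLaplace g η := by
  obtain ⟨M, hM⟩ := isCompact_Icc.exists_bound_of_continuousOn (hg.continuousOn (s := Icc 0 1))
  obtain ⟨l, hl1, hl⟩ := exists_Ioc_subset_of_mem_nhds
    ((hg.continuousAt.eventually (lt_mem_nhds (half_lt_self hg₁))).and
      (lt_mem_nhds zero_lt_one)) ⟨0, one_pos⟩
  obtain ⟨p, q, hlp, hpq, hq1⟩ : ∃ p q, l < p ∧ p < q ∧ q < 1 :=
    ⟨(l + 1) / 2, ((l + 1) / 2 + 1) / 2, by linarith, by linarith, by linarith⟩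
  have hp₀ : 0 < p := (hl ⟨hlp, by linarith⟩).2
  have hgp : ∀ z ∈ Icc p 1, g 1 / 2 ≤ g z := fun z hz => (hl ⟨by linarith [hz.1], hz.2⟩).1.le
  have hgrow : Tendsto (fun η => (1 - q) * (g 1 / 2) * exp (η * (q ^ 2 - p ^ 2))) atTop atTop :=
    (tendsto_exp_atTop.comp (tendsto_id.atTop_mul_const (by nlinarith))).const_mul_atTop
      (by nlinarith)
  filter_upwards [eventually_ge_atTop 0, hgrow.eventually_gt_atTop (p * M)] with η hη hηM
  have h₁ := mul_le_integral_of_forall_le (m := -M * exp (η * p ^ 2)) hp₀.le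
    (intervalIntegrable_mul_exp_sq hg η 0 p) fun z hz => by
      have hgz := hM z ⟨hz.1, by linarith [hz.2]⟩
      have hexp : exp (η * z ^ 2) ≤ exp (η * p ^ 2) :=
        exp_le_exp.2 (mul_le_mul_of_nonneg_left (pow_le_pow_left₀ hz.1 hz.2 2) hη)
      nlinarith [mul_le_mul_of_nonneg_right (neg_le_of_abs_le hgz) (exp_pos (η * z ^ 2)).le,
        mul_le_mul_of_nonneg_left hexp ((norm_nonneg _).trans hgz)]
  rw [sub_zero] at h₁
  have h₂ : 0 ≤ ∫ z in p..q, g z * exp (η * z ^ 2) :=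
    integral_nonneg (by linarith) fun z hz => mul_nonneg
      ((half_pos hg₁).le.trans (hgp z ⟨hz.1, by linarith [hz.2]⟩)) (exp_pos _).le
  have h₃ : (1 - q) * (g 1 / 2 * exp (η * q ^ 2)) ≤ ∫ z in q..1, g z * exp (η * z ^ 2) :=
    mul_le_integral_of_forall_le (by linarith) (intervalIntegrable_mul_exp_sq hg η _ _)
      fun z hz => mul_le_mul (hgp z ⟨by linarith [hz.1], hz.2⟩)
        (exp_le_exp.2 (mul_le_mul_of_nonneg_left (pow_le_pow_left₀ (by linarith) hz.1 2) hη))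
        (exp_pos _).le
        ((half_pos hg₁).le.trans (hgp z ⟨by linarith [hz.1], hz.2⟩))
  have hsplit : exp (η * q ^ 2) = exp (η * p ^ 2) * exp (η * (q ^ 2 - p ^ 2)) := by
    rw [← exp_add]; ring_nf
  rw [hsplit] at h₃
  rw [sqLaplace_eq_add_add hg η p q]
  nlinarith [mul_lt_mul_of_pos_left hηM (exp_pos (η * p ^ 2))]

theorem eventually_atBot_sqLaplace_pos (hg : Continuous g) (hg₀ : 0 < g 0) :
    ∀ᶠ η in atBot, 0 < sqLaplace g η := by
  obtain ⟨M, hM⟩ := isCompact_Icc.exists_bound_of_continuousOn (hg.continuousOn (s := Icc 0 1))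
  obtain ⟨u, hu0, hu⟩ := exists_Ico_subset_of_mem_nhds
    ((hg.continuousAt.eventually (lt_mem_nhds (half_lt_self hg₀))).and
      (gt_mem_nhds zero_lt_one)) ⟨1, one_pos⟩
  obtain ⟨p, q, hp₀, hpq, hqu⟩ : ∃ p q, 0 < p ∧ p < q ∧ q < u :=
    ⟨u / 4, u / 2, by linarith, by linarith, by linarith⟩
  have hq1 : q < 1 := (hu ⟨by linarith, hqu⟩).2
  have hgq : ∀ z ∈ Icc 0 q, g 0 / 2 ≤ g z := fun z hz => (hu ⟨hz.1, by linarith [hz.2]⟩).1.le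
  have hdecay : Tendsto (fun η => (1 - q) * M * exp (η * (q ^ 2 - p ^ 2))) atBot (𝓝 0) := by
    simpa using (tendsto_exp_atBot.comp (tendsto_id.atBot_mul_const (by nlinarith))).const_mul
      ((1 - q) * M)
  filter_upwards [eventually_le_atBot 0, hdecay.eventually (gt_mem_nhds (by positivity :
    0 < p * (g 0 / 2)))] with η hη hηM
  have h₁ := mul_le_integral_of_forall_le (m := g 0 / 2 * exp (η * p ^ 2)) hp₀.le
    (intervalIntegrable_mul_exp_sq hg η 0 p) fun z hz =>
      mul_le_mul (hgq z ⟨hz.1, by linarith [hz.2]⟩)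
      (exp_le_exp.2 (mul_le_mul_of_nonpos_left (pow_le_pow_left₀ hz.1 hz.2 2) hη)) (exp_pos _).le
      ((half_pos hg₀).le.trans (hgq z ⟨hz.1, by linarith [hz.2]⟩))
  rw [sub_zero] at h₁
  have h₂ : 0 ≤ ∫ z in p..q, g z * exp (η * z ^ 2) :=
    integral_nonneg hpq.le fun z hz => mul_nonneg
      ((half_pos hg₀).le.trans (hgq z ⟨by linarith [hz.1], hz.2⟩)) (exp_pos _).le
  have h₃ := mul_le_integral_of_forall_le (m := -M * exp (η * q ^ 2)) hq1.le
    (intervalIntegrable_mul_exp_sq hg η q 1) fun z hz => by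
      have hgz := hM z ⟨by linarith [hz.1], hz.2⟩
      have hexp : exp (η * z ^ 2) ≤ exp (η * q ^ 2) :=
        exp_le_exp.2 (mul_le_mul_of_nonpos_left (pow_le_pow_left₀ (by linarith) hz.1 2) hη)
      nlinarith [mul_le_mul_of_nonneg_right (neg_le_of_abs_le hgz) (exp_pos (η * z ^ 2)).le,
        mul_le_mul_of_nonneg_left hexp ((norm_nonneg _).trans hgz)]
  have hsplit : exp (η * q ^ 2) = exp (η * p ^ 2) * exp (η * (q ^ 2 - p ^ 2)) := by
    rw [← exp_add]; ring_nf
  rw [hsplit] at h₃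
  rw [sqLaplace_eq_add_add hg η p q]
  nlinarith [mul_lt_mul_of_pos_left hηM (exp_pos (η * p ^ 2))]

end sqLaplace

theorem strictQuasiconvex_exp_mul_sqLaplace (A B : ℝ) :
    StrictQuasiconvex fun η =>
      exp (-B * η) * sqLaplace (fun z => (z ^ 2 - A) * (z ^ 2 - B)) η := by
  set P : ℝ → ℝ := fun z => (z ^ 2 - A) * (z ^ 2 - B)
  have hP : Continuous P := by fun_prop
  have hP_sq (z : ℝ) : (z ^ 2 - A) * ((z ^ 2 - B) * P z) = P z ^ 2 := by ring
  obtain ⟨z₀, hz₀, hPz₀⟩ : ∃ z ∈ Icc (0:ℝ) 1, P z ≠ 0 := by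
    by_contra! h
    have h₀ := h 0 (by norm_num)
    have h₁ := h (1 / 2) (by norm_num)
    have h₂ := h 1 (by norm_num)
    simp only [P, mul_eq_zero, sub_eq_zero] at h₀ h₁ h₂
    rcases h₀ with h₀ | h₀ <;> rcases h₁ with h₁ | h₁ <;> rcases h₂ with h₂ | h₂ <;> linarith
  have hmono : StrictMono fun η => exp (-A * η) * sqLaplace (fun z => (z ^ 2 - B) * P z) η :=
    strictMono_of_hasDerivAt_pos (fun η => hasDerivAt_exp_mul_sqLaplace (by fun_prop) A η)
      fun η => mul_pos (exp_pos _) <| sqLaplace_pos (by fun_prop)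
        (fun z _ => hP_sq z ▸ sq_nonneg _) ⟨z₀, hz₀, hP_sq z₀ ▸ by positivity⟩ η
  refine strictQuasiconvex_of_hasDerivAt (fun η => hasDerivAt_exp_mul_sqLaplace hP B η)
    fun x y hxy hx => ?_
  rw [mul_nonneg_iff_of_pos_left (exp_pos _)] at hx
  rw [mul_pos_iff_of_pos_left (exp_pos _), ← mul_pos_iff_of_pos_left (exp_pos (-A * y))]
  exact (mul_nonneg (exp_pos _).le hx).trans_lt (hmono hxy)

theorem phi_eq_div (η : ℝ) :
    phi η = sqLaplace (fun _ => 1) η / sqLaplace (fun z => z ^ 2 * (1 - z ^ 2)) η := by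
  simp only [phi, sqLaplace, one_mul]

theorem sqLaplace_denominator_pos (η : ℝ) : 0 < sqLaplace (fun z => z ^ 2 * (1 - z ^ 2)) η :=
  sqLaplace_pos (by fun_prop) (fun z hz => mul_nonneg (sq_nonneg z) (by nlinarith [hz.1, hz.2]))
    ⟨1 / 2, by norm_num, by norm_num⟩ η

theorem lt_phi_iff (c η : ℝ) :
    c < phi η ↔ 0 < sqLaplace (fun z => 1 - c * (z ^ 2 * (1 - z ^ 2))) η := by
  rw [phi_eq_div, lt_div_iff₀ (sqLaplace_denominator_pos η), sqLaplace_sub (by fun_prop)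
    (by fun_prop), sqLaplace_const_mul, sub_pos]

theorem sqLaplace_one_sub_phi_mul (η : ℝ) :
    sqLaplace (fun z => 1 - phi η * (z ^ 2 * (1 - z ^ 2))) η = 0 := by
  rw [sqLaplace_sub (by fun_prop) (by fun_prop), sqLaplace_const_mul, phi_eq_div,
    div_mul_cancel₀ _ (sqLaplace_denominator_pos η).ne', sub_self]

theorem four_lt_phi (η : ℝ) : 4 < phi η := by
  rw [lt_phi_iff]
  convert sqLaplace_pos (g := fun z => (1 - 2 * z ^ 2) ^ 2) (by fun_prop)
    (fun z _ => sq_nonneg _) ⟨0, by norm_num, by norm_num⟩ η using 3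
  ring

theorem continuous_phi : Continuous phi := by
  rw [funext phi_eq_div]
  exact (continuous_sqLaplace continuous_const).div (continuous_sqLaplace (by fun_prop))
    fun η => (sqLaplace_denominator_pos η).ne'

theorem tendsto_phi_cocompact : Tendsto phi (cocompact ℝ) atTop := by
  rw [cocompact_eq_atBot_atTop, tendsto_sup]
  constructor <;> refine tendsto_atTop.2 fun c => ?_
  · filter_upwards [eventually_atBot_sqLaplace_pos
      (g := fun z => 1 - c * (z ^ 2 * (1 - z ^ 2))) (by fun_prop) (by norm_num)] with η hη
      using ((lt_phi_iff c η).2 hη).le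
  · filter_upwards [eventually_atTop_sqLaplace_pos
      (g := fun z => 1 - c * (z ^ 2 * (1 - z ^ 2))) (by fun_prop) (by norm_num)] with η hη
      using ((lt_phi_iff c η).2 hη).le

theorem exists_factorization {c : ℝ} (hc : 4 < c) :
    ∃ A B : ℝ, ∀ z : ℝ, 1 - c * (z ^ 2 * (1 - z ^ 2)) = c * ((z ^ 2 - A) * (z ^ 2 - B)) := by
  obtain ⟨s, hs⟩ : ∃ s, s ^ 2 = 1 - 4 / c :=
    ⟨_, sq_sqrt (by rw [sub_nonneg, div_le_one (by linarith)]; linarith)⟩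
  refine ⟨(1 - s) / 2, (1 + s) / 2, fun z => ?_⟩
  have : c * (4 / c) = 4 := mul_div_cancel₀ _ (by linarith)
  linear_combination (c / 4) * hs - this / 4

theorem strictQuasiconvex_phi : StrictQuasiconvex phi := by
  intro η₁ η₂ η₃ h₁₂ h₂₃
  obtain ⟨A, B, hAB⟩ := exists_factorization (four_lt_phi η₂)
  have hc : 0 < phi η₂ := by linarith [four_lt_phi η₂]
  have hsign (η : ℝ) : phi η₂ < phi η ↔
      0 < exp (-B * η) * sqLaplace (fun z => (z ^ 2 - A) * (z ^ 2 - B)) η := by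
    rw [lt_phi_iff, funext hAB, sqLaplace_const_mul, mul_pos_iff_of_pos_left hc,
      mul_pos_iff_of_pos_left (exp_pos _)]
  have hzero : exp (-B * η₂) * sqLaplace (fun z => (z ^ 2 - A) * (z ^ 2 - B)) η₂ = 0 := by
    have := sqLaplace_one_sub_phi_mul η₂
    rw [funext hAB, sqLaplace_const_mul] at this
    rw [(mul_eq_zero.1 this).resolve_left hc.ne', mul_zero]
  have h := strictQuasiconvex_exp_mul_sqLaplace A B h₁₂ h₂₃
  dsimp only at h
  rw [hzero, lt_max_iff, ← hsign, ← hsign] at h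
  exact lt_max_iff.2 h

/-- `φ` attains a finite global minimum at a unique point `ηs`, is strictly decreasing on
`(−∞, ηs]` and strictly increasing on `[ηs, ∞)`; hence `φ η = α` has no solution for
`α < φ ηs`, only the solution `ηs` for `α = φ ηs`, and exactly two solutions
`η₂ < ηs < η₁` for `α > φ ηs`. -/
theorem stmt0 :
    ∃ ηs : ℝ,
      (∀ η : ℝ, η ≠ ηs → phi ηs < phi η) ∧
      StrictAntiOn phi (Set.Iic ηs) ∧
      StrictMonoOn phi (Set.Ici ηs) ∧
      (∀ α : ℝ, α < phi ηs → ¬ ∃ η : ℝ, phi η = α) ∧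
      (∀ η : ℝ, phi η = phi ηs → η = ηs) ∧
      (∀ α : ℝ, phi ηs < α →
        ∃ η₁ η₂ : ℝ, η₂ < ηs ∧ ηs < η₁ ∧ phi η₁ = α ∧ phi η₂ = α ∧
          ∀ η : ℝ, phi η = α → η = η₁ ∨ η = η₂) := by
  obtain ⟨ηs, hmin⟩ := continuous_phi.exists_forall_le tendsto_phi_cocompact
  have hlt := strictQuasiconvex_phi.lt_of_forall_le hmin
  have hanti := strictQuasiconvex_phi.strictAntiOn_Iic hmin
  have hmono := strictQuasiconvex_phi.strictMonoOn_Ici hmin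
  refine ⟨ηs, hlt, hanti, hmono, ?_, fun η hη => ?_, fun α hα => ?_⟩
  · rintro α hα ⟨η, rfl⟩
    exact (hmin η).not_gt hα
  · by_contra hne
    exact (hlt hne).ne' hη
  obtain ⟨η₁, hη₁, rfl⟩ := exists_gt_eq_of_tendsto_atTop continuous_phi
    (tendsto_phi_cocompact.mono_left atTop_le_cocompact) hα
  obtain ⟨η₂, hη₂, hφ⟩ := exists_lt_eq_of_tendsto_atBot continuous_phi
    (tendsto_phi_cocompact.mono_left atBot_le_cocompact) hα
  refine ⟨η₁, η₂, hη₂, hη₁, rfl, hφ, fun η hη => ?_⟩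
  rcases le_total η ηs with h | h
  · exact .inr (hanti.injOn h hη₂.le (hη.trans hφ.symm))
  · exact .inl (hmono.injOn h hη₁.le hη)
end
end

section
/- Let Q be a real symmetric traceless 3×3 matrix. Then Q satisfies the stationarity equation aQ − b(Q² − (tr(Q²)/3) I) + c tr(Q²) Q = 0 if and only if Q = s (n nᵀ − I/3) for some unit vector n ∈ ℝ³ and some s ∈ ℝ with either s = 0, or b² − 24ac ≥ 0 and s ∈ {s₊, s₋}. (Here the stationarity equation is the Euler–Lagrange equation of F_b within 𝒬.) -/
open Real

noncomputable section

abbrev Mat3 : Type := Matrix (Fin 3) (Fin 3) ℝ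

/-- The space 𝒬 of real symmetric traceless 3×3 matrices. -/
def QSet : Set Mat3 := {Q | Q.IsSymm ∧ Q.trace = 0}

/-- The Landau–de Gennes bulk energy
`F_b(Q) = (a/2) tr(Q²) − (b/3) tr(Q³) + (c/4) (tr(Q²))²`. -/
noncomputable def Fb (a b c : ℝ) (Q : Mat3) : ℝ :=
  a / 2 * (Q * Q).trace - b / 3 * (Q * Q * Q).trace + c / 4 * ((Q * Q).trace) ^ 2

/-- The uniaxial tensor `s (n nᵀ − I/3)`. -/
noncomputable def uniQ (s : ℝ) (n : Fin 3 → ℝ) : Mat3 :=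
  s • (Matrix.vecMulVec n n - (1 / 3 : ℝ) • (1 : Mat3))

/-- `s₊ = (b + √(b² − 24ac))/(4c)`. -/
noncomputable def splus (a b c : ℝ) : ℝ := (b + Real.sqrt (b ^ 2 - 24 * a * c)) / (4 * c)

/-- `s₋ = (b − √(b² − 24ac))/(4c)`. -/
noncomputable def sminus (a b c : ℝ) : ℝ := (b - Real.sqrt (b ^ 2 - 24 * a * c)) / (4 * c)

/-!
The stationarity equation says `b Q² = (a + c tr Q²) Q + (b tr Q² / 3) I`, so for `Q ≠ 0` the
symmetric matrix `Q` is annihilated by a real quadratic whose roots have opposite signs (their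
product is `-tr Q² / 3`). The spectral projection `P` onto the larger root is a symmetric
idempotent, so its trace is its rank, and the signs of the roots put it strictly between 0 and 3.
Tracelessness of `Q` then gives `Q = s (n nᵀ - I/3)` with `P = n nᵀ` (rank 1) or
`P = I - n nᵀ` (rank 2). On such uniaxial tensors the equation reduces to
`(2cs² - bs + 3a) Q = 0`, whose nonzero solutions are the two roots `s₊, s₋`.
-/

open Matrix

section SymmetricIdempotent

variable {ι : Type*} [Fintype ι]

theorem Matrix.IsSymm.trace_mul_self_nonneg {M : Matrix ι ι ℝ} (hM : M.IsSymm) :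
    0 ≤ (M * M).trace := by
  simpa [conjTranspose_eq_transpose_of_trivial, hM.eq] using
    (posSemidef_conjTranspose_mul_self M).trace_nonneg

theorem Matrix.IsSymm.eq_zero_of_trace_mul_self_eq_zero {M : Matrix ι ι ℝ} (hM : M.IsSymm)
    (h : (M * M).trace = 0) : M = 0 := by
  rw [← trace_conjTranspose_mul_self_eq_zero_iff]
  simpa [conjTranspose_eq_transpose_of_trivial, hM.eq] using h

theorem Matrix.IsSymm.exists_eq_vecMulVec_of_isIdempotentElem_of_trace_eq_one
    {P : Matrix ι ι ℝ} (hP : P.IsSymm) (hPP : IsIdempotentElem P) (htr : P.trace = 1) :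
    ∃ n : ι → ℝ, n ⬝ᵥ n = 1 ∧ P = vecMulVec n n := by
  obtain ⟨j, -, hj⟩ := Finset.exists_ne_zero_of_sum_ne_zero (s := Finset.univ) (f := P.diag)
    (by rw [← trace, htr]; exact one_ne_zero)
  set v : ι → ℝ := fun i => P i j
  have hPv : P *ᵥ v = v := funext fun i => by
    simpa [mul_apply, mulVec, dotProduct] using congrFun₂ hPP.eq i j
  have hvP : v ᵥ* P = v := by rw [← mulVec_transpose, hP.eq, hPv]
  have hvv : v ⬝ᵥ v = P j j := by
    simpa [mul_apply, dotProduct, v, hP.apply] using congrFun₂ hPP.eq j j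
  have hα : 0 < P j j := lt_of_le_of_ne (hvv ▸ by simpa using dotProduct_star_self_nonneg v)
    (Ne.symm hj)
  set M := P j j • P - vecMulVec v v
  have hM : M.IsSymm := by
    simp only [M, IsSymm, transpose_sub, transpose_smul, transpose_vecMulVec, hP.eq]
  have hMM : M * M = P j j • M := by
    have hPw : P * vecMulVec v v = vecMulVec v v := by rw [mul_vecMulVec, hPv]
    have hwP : vecMulVec v v * P = vecMulVec v v := by rw [vecMulVec_mul, hvP]
    have hww : vecMulVec v v * vecMulVec v v = P j j • vecMulVec v v := by
      rw [vecMulVec_mul_vecMulVec, hvv, vecMulVec_smul]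
    simp only [M, sub_mul, mul_sub, Matrix.smul_mul, Matrix.mul_smul, hPP.eq, hPw, hwP, hww]
    module
  have hM0 : M = 0 := hM.eq_zero_of_trace_mul_self_eq_zero <| by
    simp [hMM, M, trace_sub, htr, hvv]
  refine ⟨(√(P j j))⁻¹ • v, ?_, ?_⟩
  · rw [dotProduct_smul, smul_dotProduct, hvv, smul_eq_mul, smul_eq_mul, ← mul_assoc,
      ← mul_inv, Real.mul_self_sqrt hα.le, inv_mul_cancel₀ hα.ne']
  · rw [smul_vecMulVec, vecMulVec_smul, smul_smul, ← mul_inv, Real.mul_self_sqrt hα.le,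
      ← sub_eq_zero.mp hM0, smul_smul, inv_mul_cancel₀ hα.ne', one_smul]

variable [DecidableEq ι]

theorem Matrix.exists_trace_eq_natCast_of_isIdempotentElem {K : Type*} [Field K]
    {P : Matrix ι ι K} (hP : IsIdempotentElem P) :
    ∃ k : ℕ, P.trace = k :=
  ⟨_, by rw [← trace_toLin'_eq,
    (LinearMap.IsIdempotentElem.isProj_range (toLin' P) (hP.map toLinAlgEquiv')).trace]⟩

end SymmetricIdempotent

def IsUniaxial (Q : Mat3) : Prop :=
  ∃ (s : ℝ) (n : Fin 3 → ℝ), ∑ i, n i ^ 2 = 1 ∧ Q = uniQ s n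

theorem isUniaxial_zero : IsUniaxial 0 :=
  ⟨0, Pi.single 0 1, by simp [Fin.sum_univ_three], by simp [uniQ]⟩

theorem isUniaxial_smul_add_smul_one {P : Mat3} (hP : P.IsSymm) (hPP : IsIdempotentElem P)
    {d μ : ℝ} (htr : (d • P + μ • (1 : Mat3)).trace = 0) (hpos : 0 < P.trace)
    (hlt : P.trace < 3) : IsUniaxial (d • P + μ • 1) := by
  have hμ : μ = -(d * P.trace) / 3 := by
    simp only [trace_add, trace_smul, trace_one, Fintype.card_fin, smul_eq_mul, Nat.cast_ofNat]
      at htr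
    linarith
  obtain ⟨k, hk⟩ := exists_trace_eq_natCast_of_isIdempotentElem hPP
  have hk' : k = 1 ∨ k = 2 := by
    rw [hk] at hpos hlt
    have : 0 < k := by exact_mod_cast hpos
    have : k < 3 := by exact_mod_cast hlt
    omega
  rcases hk' with rfl | rfl
  · obtain ⟨n, hn, rfl⟩ :=
      hP.exists_eq_vecMulVec_of_isIdempotentElem_of_trace_eq_one hPP (by simpa using hk)
    refine ⟨d, n, by simpa [dotProduct, sq] using hn, ?_⟩
    rw [hμ, hk, uniQ]
    module
  · have hQ' : (1 - P).IsSymm := by simp [IsSymm, hP.eq]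
    obtain ⟨n, hn, hPn⟩ :=
      hQ'.exists_eq_vecMulVec_of_isIdempotentElem_of_trace_eq_one hPP.one_sub
      (by rw [trace_sub, hk, trace_one]; norm_num)
    refine ⟨-d, n, by simpa [dotProduct, sq] using hn, ?_⟩
    rw [hμ, hk, uniQ, ← hPn]
    module

theorem isUniaxial_of_mul_self_eq {Q : Mat3} (hQ : Q.IsSymm) (htr : Q.trace = 0) {α β : ℝ}
    (h : Q * Q = α • Q + β • (1 : Mat3)) : IsUniaxial Q := by
  rcases eq_or_ne Q 0 with rfl | hQ0
  · exact isUniaxial_zero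
  have hβ : 0 < β := by
    have h3 : (Q * Q).trace = β * 3 := by simp [h, htr]
    have := lt_of_le_of_ne hQ.trace_mul_self_nonneg
      (Ne.symm (mt hQ.eq_zero_of_trace_mul_self_eq_zero hQ0))
    linarith
  set d := √(α ^ 2 + 4 * β)
  have hd2 : d ^ 2 = α ^ 2 + 4 * β := Real.sq_sqrt (by positivity)
  have hαd : |α| < d := (Real.lt_sqrt (abs_nonneg α)).mpr (by rw [sq_abs]; linarith)
  have hd : 0 < d := (abs_nonneg α).trans_lt hαd
  set μ := (α - d) / 2
  set P := d⁻¹ • (Q - μ • (1 : Mat3))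
  have hQP : Q = d • P + μ • 1 := by
    rw [smul_smul, mul_inv_cancel₀ hd.ne', one_smul, sub_add_cancel]
  have hQμ : (Q - μ • (1 : Mat3)) * (Q - μ • 1) = d • (Q - μ • 1) := by
    calc _ = Q * Q - (2 * μ) • Q + μ ^ 2 • (1 : Mat3) := by
          simp only [sub_mul, mul_sub, Matrix.smul_mul, Matrix.mul_smul, one_mul, mul_one,
            smul_smul]
          module
      _ = _ := by
          rw [h]
          match_scalars <;> [ring; linear_combination (-1 / 4 : ℝ) * hd2]
  have hPP : IsIdempotentElem P := by
    rw [IsIdempotentElem, Matrix.smul_mul, Matrix.mul_smul, hQμ, smul_smul, smul_smul,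
      inv_mul_cancel_right₀ hd.ne']
  have htrP : P.trace = 3 * (d - α) / (2 * d) := by
    simp only [P, trace_smul, trace_sub, htr, trace_one, Fintype.card_fin, smul_eq_mul, μ]
    field_simp
    ring
  rw [hQP] at htr ⊢
  refine isUniaxial_smul_add_smul_one ?_ hPP htr ?_ ?_
  · simp [P, IsSymm, hQ.eq]
  · rw [htrP]
    exact div_pos (by linarith [le_abs_self α]) (by positivity)
  · rw [htrP, div_lt_iff₀ (by positivity)]
    linarith [neg_abs_le α]

theorem quadratic_eq_zero_iff_eq_splus_or_sminus {a b c s : ℝ} (hc : c ≠ 0) :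
    2 * c * s ^ 2 - b * s + 3 * a = 0 ↔
      0 ≤ b ^ 2 - 24 * a * c ∧ (s = splus a b c ∨ s = sminus a b c) := by
  have hdisc : discrim (2 * c) (-b) (3 * a) = b ^ 2 - 24 * a * c := by rw [discrim]; ring
  have hroots (hD : 0 ≤ b ^ 2 - 24 * a * c) :
      2 * c * (s * s) + -b * s + 3 * a = 0 ↔ s = splus a b c ∨ s = sminus a b c := by
    rw [quadratic_eq_zero_iff (mul_ne_zero two_ne_zero hc)
      (by rw [hdisc, Real.mul_self_sqrt hD]), splus, sminus, neg_neg,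
      show 2 * (2 * c) = 4 * c by ring]
  rw [show 2 * c * s ^ 2 - b * s + 3 * a = 2 * c * (s * s) + -b * s + 3 * a by ring]
  refine ⟨fun h => ?_, fun ⟨hD, hs⟩ => (hroots hD).mpr hs⟩
  have hD : 0 ≤ b ^ 2 - 24 * a * c := by
    rw [← hdisc, discrim_eq_sq_of_quadratic_eq_zero h]
    positivity
  exact ⟨hD, (hroots hD).mp h⟩

/-- The gradient of `Fb a b c` within `QSet`: the traceless part of the Euclidean gradient. -/
def bulkGradient (a b c : ℝ) (Q : Mat3) : Mat3 :=
  a • Q - b • (Q * Q - ((Q * Q).trace / 3) • (1 : Mat3)) + (c * (Q * Q).trace) • Q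

theorem mul_self_eq_of_bulkGradient_eq_zero {a b c : ℝ} {Q : Mat3} (hb : b ≠ 0)
    (h : bulkGradient a b c Q = 0) :
    Q * Q = ((a + c * (Q * Q).trace) / b) • Q + ((Q * Q).trace / 3) • (1 : Mat3) := by
  rw [bulkGradient] at h
  apply smul_right_injective Mat3 hb
  simp only [smul_add, smul_smul, mul_div_cancel₀ _ hb]
  linear_combination (norm := module) -h

section Uniaxial

variable {s : ℝ} {n : Fin 3 → ℝ}

theorem uniQ_mul_self (hn : ∑ i, n i ^ 2 = 1) :
    uniQ s n * uniQ s n = (s / 3) • uniQ s n + (2 * s ^ 2 / 9) • (1 : Mat3) := by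
  have hnn : vecMulVec n n * vecMulVec n n = vecMulVec n n := by
    rw [vecMulVec_mul_vecMulVec, show n ⬝ᵥ n = 1 by simpa [dotProduct, sq] using hn, one_smul]
  simp only [uniQ, Matrix.smul_mul, Matrix.mul_smul, sub_mul, mul_sub, one_mul, mul_one, hnn]
  module

theorem trace_uniQ_mul_self (hn : ∑ i, n i ^ 2 = 1) :
    (uniQ s n * uniQ s n).trace = 2 * s ^ 2 / 3 := by
  rw [uniQ_mul_self hn]
  simp [uniQ, trace_vecMulVec, dotProduct, ← sq, hn]
  ring

theorem uniQ_eq_zero_iff (hn : ∑ i, n i ^ 2 = 1) : uniQ s n = 0 ↔ s = 0 := by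
  refine ⟨fun h => ?_, fun h => by simp [uniQ, h]⟩
  have := trace_uniQ_mul_self (s := s) hn
  rw [h, mul_zero, trace_zero] at this
  simpa using this.symm

theorem bulkGradient_uniQ (a b c : ℝ) (hn : ∑ i, n i ^ 2 = 1) :
    bulkGradient a b c (uniQ s n) = ((2 * c * s ^ 2 - b * s + 3 * a) / 3) • uniQ s n := by
  rw [bulkGradient, trace_uniQ_mul_self hn, uniQ_mul_self hn]
  module

theorem bulkGradient_uniQ_eq_zero_iff {a b c : ℝ} (hc : c ≠ 0) (hn : ∑ i, n i ^ 2 = 1) :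
    bulkGradient a b c (uniQ s n) = 0 ↔
      s = 0 ∨ (0 ≤ b ^ 2 - 24 * a * c ∧ (s = splus a b c ∨ s = sminus a b c)) := by
  rw [bulkGradient_uniQ a b c hn, smul_eq_zero, div_eq_zero_iff,
    quadratic_eq_zero_iff_eq_splus_or_sminus hc, uniQ_eq_zero_iff hn]
  simp only [three_ne_zero, or_false]
  exact or_comm

end Uniaxial

/-- A symmetric traceless `Q` satisfies the stationarity equation
`aQ − b(Q² − (tr Q²/3) I) + c (tr Q²) Q = 0` iff `Q = s (n nᵀ − I/3)` for some unit
vector `n` and some `s` with `s = 0`, or `b² − 24ac ≥ 0` and `s ∈ {s₊, s₋}`. -/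
theorem stmt7 (a b c : ℝ) (hb : 0 < b) (hc : 0 < c)
    (Q : Mat3) (hQ : Q.IsSymm) (htr : Q.trace = 0) :
    (a • Q - b • (Q * Q - ((Q * Q).trace / 3) • (1 : Mat3)) + (c * (Q * Q).trace) • Q = 0)
    ↔
    ∃ (s : ℝ) (n : Fin 3 → ℝ), (∑ i, (n i) ^ 2 = 1) ∧ Q = uniQ s n ∧
      (s = 0 ∨ (0 ≤ b ^ 2 - 24 * a * c ∧ (s = splus a b c ∨ s = sminus a b c))) := by
  change bulkGradient a b c Q = 0 ↔ _
  constructor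
  · intro h
    obtain ⟨s, n, hn, rfl⟩ :=
      isUniaxial_of_mul_self_eq hQ htr (mul_self_eq_of_bulkGradient_eq_zero hb.ne' h)
    exact ⟨s, n, hn, rfl, (bulkGradient_uniQ_eq_zero_iff hc.ne' hn).mp h⟩
  · rintro ⟨s, n, hn, rfl, hs⟩
    exact (bulkGradient_uniQ_eq_zero_iff hc.ne' hn).mpr hs
end
end

section
/- Assume a < 0 (so that b² − 24ac > 0 and s₊ > 0). Then: (i) for every Q ∈ 𝒬, F_b(Q) ≥ F_b(s₊ (n nᵀ − I/3)) (this value being independent of the unit vector n), with equality if and only if Q = s₊ (n nᵀ − I/3) for some unit vector n ∈ ℝ³; (ii) Q = 0 is not a local minimizer of F_b on 𝒬; (iii) for any unit vector n, s₋ (n nᵀ − I/3) is not a local minimizer of F_b on 𝒬. -/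
open Real

noncomputable section

/-!
Every `Q ∈ 𝒬` is `∑ μᵢ uᵢ uᵢᵀ` for an orthonormal frame `u` with `∑ μᵢ = 0`, and `F_b(Q)` only
depends on the power sums `p = ∑ μᵢ²` and `q = ∑ μᵢ³`. Write `p = 2s²/3` with `s ≥ 0`. For
traceless spectra `p³/6 - q² = ((μ₀ - μ₁)(μ₁ - μ₂)(μ₂ - μ₀))²/3`, so `q ≤ 2s³/9`, with equality
exactly for the uniaxial spectrum `(2s/3, -s/3, -s/3)`. Hence `F_b(Q) ≥ f(s) := F_b(s (n nᵀ - I/3))`,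
and on `s ≥ 0` the quartic `f` is minimal exactly at its critical point `s₊`, since
`f(s) - f(s₊)` is `(s - s₊)²` times a positive quadratic.

Along the ray `t (n nᵀ - I/3)` the energy is `t² (a/3 + O(t))`, so `0` is not a local minimizer.
Along `s₋ (n nᵀ - I/3) + t (v vᵀ - w wᵀ)`, with `(n, v, w)` orthonormal, it is
`f(s₋) + b s₋ t² + c t⁴`, and `b s₋ < 0`.
-/

open Matrix Filter Topology

section Frames

variable {ι : Type*} [Fintype ι]

/-- The symmetric matrix with orthonormal eigenbasis `u` and eigenvalues `μ`. -/
def frameMatrix (u : OrthonormalBasis ι ℝ (EuclideanSpace ℝ ι)) : (ι → ℝ) →ₗ[ℝ] Matrix ι ι ℝ :=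
  Fintype.linearCombination ℝ fun i => vecMulVec (u i).ofLp (u i).ofLp

variable (u : OrthonormalBasis ι ℝ (EuclideanSpace ℝ ι))

lemma frameMatrix_apply (μ : ι → ℝ) :
    frameMatrix u μ = ∑ i, μ i • vecMulVec (u i).ofLp (u i).ofLp :=
  Fintype.linearCombination_apply ℝ _ μ

lemma OrthonormalBasis.sum_dotProduct_smul_ofLp (x : ι → ℝ) :
    ∑ j, ((u j).ofLp ⬝ᵥ x) • (u j).ofLp = x := by
  have h := congrArg WithLp.ofLp (u.sum_repr' (WithLp.toLp 2 x))
  simpa [EuclideanSpace.inner_eq_star_dotProduct, dotProduct_comm] using h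

lemma OrthonormalBasis.sum_ofLp_sq (k : ι) : ∑ i, (u k).ofLp i ^ 2 = 1 := by
  rw [← EuclideanSpace.real_norm_sq_eq, u.orthonormal.1 k, one_pow]

lemma frameMatrix_mulVec (μ x : ι → ℝ) :
    frameMatrix u μ *ᵥ x = ∑ j, (μ j * ((u j).ofLp ⬝ᵥ x)) • (u j).ofLp := by
  simp [frameMatrix_apply, Matrix.sum_mulVec, smul_mulVec, vecMulVec_mulVec, mul_smul]

lemma isSymm_frameMatrix (μ : ι → ℝ) : (frameMatrix u μ).IsSymm := by
  simp [Matrix.IsSymm, frameMatrix_apply, transpose_sum, transpose_vecMulVec]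

variable [DecidableEq ι]

lemma OrthonormalBasis.dotProduct_ofLp (i j : ι) :
    (u i).ofLp ⬝ᵥ (u j).ofLp = if i = j then 1 else 0 := by
  have h := orthonormal_iff_ite.mp u.orthonormal i j
  rwa [EuclideanSpace.inner_eq_star_dotProduct, star_trivial, dotProduct_comm] at h

lemma OrthonormalBasis.vecMulVec_mul_vecMulVec_ofLp (i j : ι) :
    vecMulVec (u i).ofLp (u i).ofLp * vecMulVec (u j).ofLp (u j).ofLp =
      if i = j then vecMulVec (u i).ofLp (u i).ofLp else 0 := by
  rw [vecMulVec_mul_vecMulVec, u.dotProduct_ofLp]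
  split_ifs with h
  · rw [h, one_smul]
  · rw [zero_smul, vecMulVec_zero]

lemma frameMatrix_mul (μ ν : ι → ℝ) :
    frameMatrix u μ * frameMatrix u ν = frameMatrix u (μ * ν) := by
  simp only [frameMatrix_apply, Finset.sum_mul_sum, smul_mul_smul_comm,
    u.vecMulVec_mul_vecMulVec_ofLp, smul_ite, smul_zero, Finset.sum_ite_eq, Finset.mem_univ,
    if_true, Pi.mul_apply]

lemma frameMatrix_one : frameMatrix u 1 = 1 := by
  refine ext_of_mulVec_single fun i => ?_
  simp only [frameMatrix_mulVec, Pi.one_apply, one_mul, one_mulVec, u.sum_dotProduct_smul_ofLp]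

lemma trace_frameMatrix (μ : ι → ℝ) : (frameMatrix u μ).trace = ∑ i, μ i := by
  simp [frameMatrix_apply, trace_sum, trace_vecMulVec, u.dotProduct_ofLp]

lemma Matrix.IsHermitian.eq_frameMatrix_eigenvalues {A : Matrix ι ι ℝ} (hA : A.IsHermitian) :
    A = frameMatrix hA.eigenvectorBasis hA.eigenvalues := by
  refine ext_of_mulVec_single fun i => ?_
  conv_lhs => rw [← hA.eigenvectorBasis.sum_dotProduct_smul_ofLp (Pi.single i 1)]
  simp only [frameMatrix_mulVec, mulVec_sum, mulVec_smul, hA.mulVec_eigenvectorBasis, smul_smul,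
    mul_comm]

lemma OrthonormalBasis.exists_ofLp_eq (i₀ : ι) {n : ι → ℝ} (hn : ∑ i, n i ^ 2 = 1) :
    ∃ u : OrthonormalBasis ι ℝ (EuclideanSpace ℝ ι), (u i₀).ofLp = n := by
  have hnorm : ‖WithLp.toLp 2 n‖ = 1 := by
    rw [← EuclideanSpace.real_norm_sq_eq] at hn
    exact (pow_eq_one_iff_of_nonneg (norm_nonneg _) two_ne_zero).mp hn
  have horth : Orthonormal ℝ (({i₀} : Set ι).domRestrict fun _ => WithLp.toLp 2 n) := by
    rw [orthonormal_iff_ite]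
    rintro ⟨i, rfl⟩ ⟨j, rfl⟩
    simp [Set.domRestrict, hnorm]
  obtain ⟨u, hu⟩ := horth.exists_orthonormalBasis_extension_of_card_eq
    (by simp : Module.finrank ℝ (EuclideanSpace ℝ ι) = Fintype.card ι)
  exact ⟨u, by rw [hu i₀ rfl]⟩

end Frames

def eigenEnergy (a b c : ℝ) (μ : Fin 3 → ℝ) : ℝ :=
  a / 2 * ∑ i, μ i ^ 2 - b / 3 * ∑ i, μ i ^ 3 + c / 4 * (∑ i, μ i ^ 2) ^ 2

def uniaxialEnergy (a b c s : ℝ) : ℝ := a * s ^ 2 / 3 - 2 * b * s ^ 3 / 27 + c * s ^ 4 / 9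

def uniaxialSpectrum (s : ℝ) (k : Fin 3) : Fin 3 → ℝ := fun i => if i = k then 2 * s / 3 else -s / 3

lemma Fb_frameMatrix (a b c : ℝ) (u : OrthonormalBasis (Fin 3) ℝ (EuclideanSpace ℝ (Fin 3)))
    (μ : Fin 3 → ℝ) : Fb a b c (frameMatrix u μ) = eigenEnergy a b c μ := by
  simp only [Fb, eigenEnergy, frameMatrix_mul, trace_frameMatrix, Pi.mul_apply, pow_two, pow_three,
    mul_assoc]

lemma frameMatrix_mem_QSet (u : OrthonormalBasis (Fin 3) ℝ (EuclideanSpace ℝ (Fin 3)))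
    {μ : Fin 3 → ℝ} (hμ : ∑ i, μ i = 0) : frameMatrix u μ ∈ QSet :=
  ⟨isSymm_frameMatrix u μ, (trace_frameMatrix u μ).trans hμ⟩

lemma exists_eq_frameMatrix_of_mem_QSet {Q : Mat3} (hQ : Q ∈ QSet) :
    ∃ (u : OrthonormalBasis (Fin 3) ℝ (EuclideanSpace ℝ (Fin 3))) (μ : Fin 3 → ℝ),
      ∑ i, μ i = 0 ∧ Q = frameMatrix u μ := by
  have hQh : Q.IsHermitian := hQ.1
  refine ⟨_, _, ?_, hQh.eq_frameMatrix_eigenvalues⟩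
  rw [← trace_frameMatrix, ← hQh.eq_frameMatrix_eigenvalues]
  exact hQ.2

lemma uniQ_eq_frameMatrix (u : OrthonormalBasis (Fin 3) ℝ (EuclideanSpace ℝ (Fin 3))) (s : ℝ)
    (k : Fin 3) : uniQ s (u k).ofLp = frameMatrix u (uniaxialSpectrum s k) := by
  have hspec : uniaxialSpectrum s k = s • (Pi.single k 1 - (1 / 3 : ℝ) • 1) := by
    ext i
    simp only [uniaxialSpectrum, Pi.smul_apply, Pi.sub_apply, Pi.single_apply, Pi.one_apply,
      smul_eq_mul]
    split_ifs <;> ring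
  rw [hspec, map_smul, map_sub, map_smul, frameMatrix_one, frameMatrix_apply]
  simp [uniQ, Pi.single_apply]

lemma sum_comp_uniaxialSpectrum (φ : ℝ → ℝ) (s : ℝ) (k : Fin 3) :
    ∑ i, φ (uniaxialSpectrum s k i) = φ (2 * s / 3) + 2 * φ (-s / 3) := by
  fin_cases k <;>
    simp only [uniaxialSpectrum, Fin.sum_univ_three, Fin.isValue, Fin.zero_eta, Fin.mk_one,
      Fin.reduceFinMk, Fin.reduceEq, if_true, if_false] <;>
    ring

lemma sum_uniaxialSpectrum (s : ℝ) (k : Fin 3) : ∑ i, uniaxialSpectrum s k i = 0 :=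
  (sum_comp_uniaxialSpectrum (fun x => x) s k).trans (by ring)

lemma eigenEnergy_uniaxialSpectrum (a b c s : ℝ) (k : Fin 3) :
    eigenEnergy a b c (uniaxialSpectrum s k) = uniaxialEnergy a b c s := by
  rw [eigenEnergy, sum_comp_uniaxialSpectrum (· ^ 2), sum_comp_uniaxialSpectrum (· ^ 3),
    uniaxialEnergy]
  ring

lemma exists_uniQ_eq_frameMatrix {n : Fin 3 → ℝ} (hn : ∑ i, n i ^ 2 = 1) (s : ℝ) :
    ∃ u : OrthonormalBasis (Fin 3) ℝ (EuclideanSpace ℝ (Fin 3)),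
      uniQ s n = frameMatrix u (uniaxialSpectrum s 0) := by
  obtain ⟨u, rfl⟩ := OrthonormalBasis.exists_ofLp_eq 0 hn
  exact ⟨u, uniQ_eq_frameMatrix u s 0⟩

lemma Fb_uniQ (a b c s : ℝ) {n : Fin 3 → ℝ} (hn : ∑ i, n i ^ 2 = 1) :
    Fb a b c (uniQ s n) = uniaxialEnergy a b c s := by
  obtain ⟨u, hu⟩ := exists_uniQ_eq_frameMatrix hn s
  rw [hu, Fb_frameMatrix, eigenEnergy_uniaxialSpectrum]

lemma uniQ_mem_QSet (s : ℝ) {n : Fin 3 → ℝ} (hn : ∑ i, n i ^ 2 = 1) : uniQ s n ∈ QSet := by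
  obtain ⟨u, hu⟩ := exists_uniQ_eq_frameMatrix hn s
  exact hu ▸ frameMatrix_mem_QSet u (sum_uniaxialSpectrum s 0)

section Scalar

variable {a b c : ℝ}

lemma abs_lt_sqrt_discr (ha : a < 0) (hc : 0 < c) : |b| < √(b ^ 2 - 24 * a * c) :=
  Real.lt_sqrt_of_sq_lt (by nlinarith [sq_abs b])

lemma splus_pos (ha : a < 0) (hc : 0 < c) : 0 < splus a b c :=
  div_pos (by linarith [neg_abs_le b, abs_lt_sqrt_discr (b := b) ha hc]) (by positivity)

lemma sminus_neg (ha : a < 0) (hc : 0 < c) : sminus a b c < 0 :=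
  div_neg_of_neg_of_pos (by linarith [le_abs_self b, abs_lt_sqrt_discr (b := b) ha hc])
    (by positivity)

lemma lt_three_mul_splus (ha : a < 0) (hc : 0 < c) : b < 3 * c * splus a b c := by
  have h := abs_lt_sqrt_discr (b := b) ha hc
  have hS : 3 * c * splus a b c = 3 * (b + √(b ^ 2 - 24 * a * c)) / 4 := by
    unfold splus; field_simp
  rw [hS]
  linarith [le_abs_self b, abs_nonneg b]

lemma quadratic_root {r : ℝ} (hr : r ^ 2 = b ^ 2 - 24 * a * c) (hc : c ≠ 0) :
    2 * c * ((b + r) / (4 * c)) ^ 2 - b * ((b + r) / (4 * c)) + 3 * a = 0 := by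
  field_simp
  linear_combination 2 * hr

lemma splus_isRoot (ha : a < 0) (hc : 0 < c) :
    2 * c * splus a b c ^ 2 - b * splus a b c + 3 * a = 0 :=
  quadratic_root (Real.sq_sqrt (by nlinarith [sq_nonneg b])) hc.ne'

lemma sminus_isRoot (ha : a < 0) (hc : 0 < c) :
    2 * c * sminus a b c ^ 2 - b * sminus a b c + 3 * a = 0 := by
  rw [sminus, sub_eq_add_neg]
  exact quadratic_root (by rw [neg_sq, Real.sq_sqrt (by nlinarith [sq_nonneg b])]) hc.ne'

lemma uniaxialEnergy_splus_lt (ha : a < 0) (hc : 0 < c) {s : ℝ} (hs : 0 ≤ s)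
    (hne : s ≠ splus a b c) : uniaxialEnergy a b c (splus a b c) < uniaxialEnergy a b c s := by
  set S := splus a b c
  have hS := splus_pos (b := b) ha hc
  have h3 : 0 < 3 * c * S - b := by linarith [lt_three_mul_splus (b := b) ha hc]
  -- `s₊` is a critical point of the quartic, so `(s - s₊)²` divides the difference
  have hfactor : uniaxialEnergy a b c s - uniaxialEnergy a b c S = (s - S) ^ 2 / 9 *
      (c * s ^ 2 + 2 / 3 * (3 * c * S - b) * s + S * (3 * c * S - b) / 3) := by
    unfold uniaxialEnergy
    linear_combination (s ^ 2 - S ^ 2) / 9 * splus_isRoot (b := b) ha hc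
  have hsq : 0 < (s - S) ^ 2 := by positivity [sub_ne_zero.mpr hne]
  have hquad : 0 < c * s ^ 2 + 2 / 3 * (3 * c * S - b) * s + S * (3 * c * S - b) / 3 := by
    positivity
  nlinarith [mul_pos hsq hquad]

lemma uniaxialEnergy_splus_le (ha : a < 0) (hc : 0 < c) {s : ℝ} (hs : 0 ≤ s) :
    uniaxialEnergy a b c (splus a b c) ≤ uniaxialEnergy a b c s := by
  rcases eq_or_ne s (splus a b c) with rfl | hne
  · exact le_rfl
  · exact (uniaxialEnergy_splus_lt ha hc hs hne).le

end Scalar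

section Spectrum

variable {μ : Fin 3 → ℝ} {s : ℝ}

lemma sum_cube_le_of_sum_sq_eq (hμ : ∑ i, μ i = 0) (hs : 0 ≤ s)
    (hp : ∑ i, μ i ^ 2 = 2 * s ^ 2 / 3) : ∑ i, μ i ^ 3 ≤ 2 * s ^ 3 / 9 := by
  rw [Fin.sum_univ_three] at hμ hp ⊢
  have hdisc : (μ 0 ^ 2 + μ 1 ^ 2 + μ 2 ^ 2) ^ 3 / 6 - (μ 0 ^ 3 + μ 1 ^ 3 + μ 2 ^ 3) ^ 2 =
      ((μ 0 - μ 1) * (μ 1 - μ 2) * (μ 2 - μ 0)) ^ 2 / 3 := by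
    rw [show μ 2 = -μ 0 - μ 1 by linarith]; ring
  have hsq : (μ 0 ^ 3 + μ 1 ^ 3 + μ 2 ^ 3) ^ 2 ≤ (2 * s ^ 3 / 9) ^ 2 := by
    rw [hp] at hdisc
    nlinarith [sq_nonneg ((μ 0 - μ 1) * (μ 1 - μ 2) * (μ 2 - μ 0))]
  exact (le_abs_self _).trans (abs_le_of_sq_le_sq hsq (by positivity))

lemma exists_eq_uniaxialSpectrum (hμ : ∑ i, μ i = 0) (hp : ∑ i, μ i ^ 2 = 2 * s ^ 2 / 3)
    (hq : ∑ i, μ i ^ 3 = 2 * s ^ 3 / 9) : ∃ k, μ = uniaxialSpectrum s k := by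
  rw [Fin.sum_univ_three] at hμ hp hq
  -- the elementary symmetric functions of `μ` are `0`, `-s²/3` and `2s³/27`
  have hcharpoly : ∀ t, ∏ j, (t - μ j) = (t - 2 * s / 3) * (t + s / 3) ^ 2 := by
    intro t
    rw [Fin.prod_univ_three]
    linear_combination (-t ^ 2 + (μ 0 + μ 1 + μ 2) * t / 2 + (μ 0 ^ 2 + μ 1 ^ 2 + μ 2 ^ 2
      - μ 0 * μ 1 - μ 1 * μ 2 - μ 2 * μ 0) / 3) * hμ - t / 2 * hp - 1 / 3 * hq
  have hroot : ∀ i, μ i = 2 * s / 3 ∨ μ i = -s / 3 := by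
    intro i
    have h := (hcharpoly (μ i)).symm.trans (Finset.prod_eq_zero (Finset.mem_univ i) (sub_self _))
    rcases mul_eq_zero.mp h with h | h
    · exact Or.inl (by linarith)
    · exact Or.inr (by linarith [(pow_eq_zero_iff two_ne_zero).mp h])
  -- when no eigenvalue, or more than one, equals `2 s / 3`, the trace forces `s = 0`
  rcases hroot 0 with h0 | h0 <;> rcases hroot 1 with h1 | h1 <;> rcases hroot 2 with h2 | h2 <;>
    first
    | (refine ⟨0, funext fun i => ?_⟩
       fin_cases i <;> simp only [uniaxialSpectrum, Fin.isValue, Fin.zero_eta, Fin.mk_one,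
         Fin.reduceFinMk, Fin.reduceEq, if_true, if_false] <;> linarith)
    | (refine ⟨1, funext fun i => ?_⟩
       fin_cases i <;> simp only [uniaxialSpectrum, Fin.isValue, Fin.zero_eta, Fin.mk_one,
         Fin.reduceFinMk, Fin.reduceEq, if_true, if_false] <;> linarith)
    | (refine ⟨2, funext fun i => ?_⟩
       fin_cases i <;> simp only [uniaxialSpectrum, Fin.isValue, Fin.zero_eta, Fin.mk_one,
         Fin.reduceFinMk, Fin.reduceEq, if_true, if_false] <;> linarith)

lemma exists_sum_sq_eq (μ : Fin 3 → ℝ) : ∃ s, 0 ≤ s ∧ ∑ i, μ i ^ 2 = 2 * s ^ 2 / 3 :=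
  ⟨√(3 / 2 * ∑ i, μ i ^ 2), Real.sqrt_nonneg _, by
    rw [Real.sq_sqrt (by positivity)]; ring⟩

lemma eigenEnergy_eq_uniaxialEnergy_add (a b c : ℝ) (hp : ∑ i, μ i ^ 2 = 2 * s ^ 2 / 3) :
    eigenEnergy a b c μ = uniaxialEnergy a b c s + b / 3 * (2 * s ^ 3 / 9 - ∑ i, μ i ^ 3) := by
  rw [eigenEnergy, uniaxialEnergy, hp]; ring

variable {a b c : ℝ}

lemma uniaxialEnergy_splus_le_eigenEnergy (ha : a < 0) (hb : 0 < b) (hc : 0 < c)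
    (hμ : ∑ i, μ i = 0) : uniaxialEnergy a b c (splus a b c) ≤ eigenEnergy a b c μ := by
  obtain ⟨s, hs, hp⟩ := exists_sum_sq_eq μ
  rw [eigenEnergy_eq_uniaxialEnergy_add a b c hp]
  have hq := sum_cube_le_of_sum_sq_eq hμ hs hp
  nlinarith [uniaxialEnergy_splus_le (b := b) ha hc hs]

lemma exists_eq_uniaxialSpectrum_splus (ha : a < 0) (hb : 0 < b) (hc : 0 < c)
    (hμ : ∑ i, μ i = 0) (h : eigenEnergy a b c μ = uniaxialEnergy a b c (splus a b c)) :
    ∃ k, μ = uniaxialSpectrum (splus a b c) k := by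
  obtain ⟨s, hs, hp⟩ := exists_sum_sq_eq μ
  rw [eigenEnergy_eq_uniaxialEnergy_add a b c hp] at h
  have hgap := mul_nonneg hb.le (sub_nonneg.mpr (sum_cube_le_of_sum_sq_eq hμ hs hp))
  have hs_eq : s = splus a b c := by
    by_contra hne
    linarith [uniaxialEnergy_splus_lt ha hc hs hne]
  have hq : ∑ i, μ i ^ 3 = 2 * s ^ 3 / 9 := by
    nlinarith [uniaxialEnergy_splus_le (b := b) ha hc hs]
  exact hs_eq ▸ exists_eq_uniaxialSpectrum hμ hp hq

end Spectrum

section Minimizers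

variable {a b c : ℝ}

lemma uniaxialEnergy_splus_le_Fb (ha : a < 0) (hb : 0 < b) (hc : 0 < c) {Q : Mat3}
    (hQ : Q ∈ QSet) : uniaxialEnergy a b c (splus a b c) ≤ Fb a b c Q := by
  obtain ⟨u, μ, hμ, rfl⟩ := exists_eq_frameMatrix_of_mem_QSet hQ
  rw [Fb_frameMatrix]
  exact uniaxialEnergy_splus_le_eigenEnergy ha hb hc hμ

lemma exists_eq_uniQ_splus_of_Fb_eq (ha : a < 0) (hb : 0 < b) (hc : 0 < c) {Q : Mat3}
    (hQ : Q ∈ QSet) (h : Fb a b c Q = uniaxialEnergy a b c (splus a b c)) :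
    ∃ n : Fin 3 → ℝ, ∑ i, n i ^ 2 = 1 ∧ Q = uniQ (splus a b c) n := by
  obtain ⟨u, μ, hμ, rfl⟩ := exists_eq_frameMatrix_of_mem_QSet hQ
  rw [Fb_frameMatrix] at h
  obtain ⟨k, rfl⟩ := exists_eq_uniaxialSpectrum_splus ha hb hc hμ h
  exact ⟨(u k).ofLp, u.sum_ofLp_sq k, (uniQ_eq_frameMatrix u _ k).symm⟩

end Minimizers

lemma not_isLocalMinOn_of_curve {X : Type*} [TopologicalSpace X] {F : X → ℝ} {S : Set X} {x : X}
    {γ : ℝ → X} {g : ℝ → ℝ} (hγ : ContinuousAt γ 0) (hγ0 : γ 0 = x) (hγS : ∀ t, γ t ∈ S)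
    (hg : ContinuousAt g 0) (hg0 : g 0 < 0) (hF : ∀ t, F (γ t) = F x + t ^ 2 * g t) :
    ¬ IsLocalMinOn F S x := by
  intro hmin
  have hγ' : Tendsto γ (𝓝[≠] 0) (𝓝[S] x) :=
    tendsto_nhdsWithin_iff.mpr ⟨hγ0 ▸ hγ.tendsto.mono_left nhdsWithin_le_nhds, .of_forall hγS⟩
  have hdescent : ∀ᶠ t in 𝓝[≠] 0, t ^ 2 * g t < 0 := by
    filter_upwards [nhdsWithin_le_nhds (hg.eventually_lt_const hg0), self_mem_nhdsWithin]
      with t hgt ht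
    exact mul_neg_of_pos_of_neg (pow_two_pos_of_ne_zero ht) hgt
  obtain ⟨t, hmin_t, hdescent_t⟩ := ((hγ'.eventually hmin).and hdescent).exists
  linarith [hF t]

lemma not_isLocalMinOn_Fb_zero {a b c : ℝ} (ha : a < 0) : ¬ IsLocalMinOn (Fb a b c) QSet 0 := by
  have he : ∑ i, (Pi.single 0 1 : Fin 3 → ℝ) i ^ 2 = 1 := by simp [Fin.sum_univ_three]
  refine not_isLocalMinOn_of_curve (γ := fun t => uniQ t (Pi.single 0 1))
    (g := fun t => a / 3 - 2 * b * t / 27 + c * t ^ 2 / 9) ?_ (by simp [uniQ])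
    (fun t => uniQ_mem_QSet t he) (by fun_prop) (by simpa using div_neg_of_neg_of_pos ha three_pos)
    fun t => ?_
  · unfold uniQ; fun_prop
  · have hF0 : Fb a b c 0 = 0 := by simp [Fb]
    rw [Fb_uniQ _ _ _ _ he, hF0, uniaxialEnergy]
    ring

lemma not_isLocalMinOn_Fb_uniQ_sminus {a b c : ℝ} (ha : a < 0) (hb : 0 < b) (hc : 0 < c)
    {n : Fin 3 → ℝ} (hn : ∑ i, n i ^ 2 = 1) :
    ¬ IsLocalMinOn (Fb a b c) QSet (uniQ (sminus a b c) n) := by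
  obtain ⟨u, hu⟩ := exists_uniQ_eq_frameMatrix hn (sminus a b c)
  set μ := uniaxialSpectrum (sminus a b c) 0
  -- a biaxial perturbation in the plane orthogonal to `n`
  let ν : Fin 3 → ℝ := ![0, 1, -1]
  refine not_isLocalMinOn_of_curve (γ := fun t => frameMatrix u (μ + t • ν))
    (g := fun t => b * sminus a b c + c * t ^ 2) ?_ (by simp [hu]) (fun t => ?_) (by fun_prop)
    (by simpa using mul_neg_of_pos_of_neg hb (sminus_neg ha hc)) fun t => ?_
  · exact ((LinearMap.continuous_of_finiteDimensional _).comp (by fun_prop)).continuousAt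
  · refine frameMatrix_mem_QSet u ?_
    simp only [μ, ν, uniaxialSpectrum, Fin.sum_univ_three, Pi.add_apply, smul_cons, smul_eq_mul,
      smul_empty, cons_val_zero, cons_val_one, cons_val, Fin.isValue, Fin.reduceEq, if_true,
      if_false]
    ring
  · rw [hu, Fb_frameMatrix, Fb_frameMatrix]
    simp only [μ, ν, eigenEnergy, uniaxialSpectrum, Fin.sum_univ_three, Pi.add_apply, smul_cons,
      smul_eq_mul, smul_empty, cons_val_zero, cons_val_one, cons_val, Fin.isValue, Fin.reduceEq,
      if_true, if_false]
    linear_combination (t ^ 2 / 3) * sminus_isRoot (b := b) ha hc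

/-- For `a < 0`: (i) `F_b` is minimized over 𝒬 exactly at the uniaxial tensors
`s₊ (n nᵀ − I/3)` (a value independent of the unit vector `n`); (ii) `Q = 0` is not a
local minimizer of `F_b` on 𝒬; (iii) no `s₋ (n nᵀ − I/3)` is a local minimizer of `F_b`
on 𝒬. -/
theorem stmt8 (a b c : ℝ) (ha : a < 0) (hb : 0 < b) (hc : 0 < c) :
    (∀ n : Fin 3 → ℝ, (∑ i, (n i) ^ 2 = 1) →
      (∀ n' : Fin 3 → ℝ, (∑ i, (n' i) ^ 2 = 1) →
        Fb a b c (uniQ (splus a b c) n) = Fb a b c (uniQ (splus a b c) n')) ∧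
      (∀ Q ∈ QSet, Fb a b c (uniQ (splus a b c) n) ≤ Fb a b c Q) ∧
      (∀ Q ∈ QSet, Fb a b c Q = Fb a b c (uniQ (splus a b c) n) ↔
        ∃ n' : Fin 3 → ℝ, (∑ i, (n' i) ^ 2 = 1) ∧ Q = uniQ (splus a b c) n')) ∧
    (¬ IsLocalMinOn (Fb a b c) QSet 0) ∧
    (∀ n : Fin 3 → ℝ, (∑ i, (n i) ^ 2 = 1) →
      ¬ IsLocalMinOn (Fb a b c) QSet (uniQ (sminus a b c) n)) := by
  refine ⟨fun n hn => ⟨fun n' hn' => ?_, fun Q hQ => ?_, fun Q hQ => ?_⟩,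
    not_isLocalMinOn_Fb_zero ha, fun n hn => not_isLocalMinOn_Fb_uniQ_sminus ha hb hc hn⟩
  · rw [Fb_uniQ _ _ _ _ hn, Fb_uniQ _ _ _ _ hn']
  · rw [Fb_uniQ _ _ _ _ hn]
    exact uniaxialEnergy_splus_le_Fb ha hb hc hQ
  · rw [Fb_uniQ _ _ _ _ hn]
    refine ⟨exists_eq_uniQ_splus_of_Fb_eq ha hb hc hQ, ?_⟩
    rintro ⟨n', hn', rfl⟩
    exact Fb_uniQ _ _ _ _ hn'

end
end

section
/- Assume a > b²/(24c). Then Q = 0 is the unique Q ∈ 𝒬 solving the stationarity equation aQ − b(Q² − (tr(Q²)/3) I) + c tr(Q²) Q = 0, and F_b(Q) > 0 = F_b(0) for every nonzero Q ∈ 𝒬; in particular Q = 0 is the strict global minimizer of F_b on 𝒬. -/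
open Real

noncomputable section

/-!
Write `p = tr Q²` and `t = tr Q³`. The eigenvalues of `Q ∈ 𝒬` are real and sum to zero, which
forces `6 t² ≤ p³`; hence `b² < 24ac` gives `(b t)² < 4ac p³` as soon as `Q ≠ 0`.
Tracing the stationarity equation against `Q` gives `b t = a p + c p²`, whose square is at least
`4ac p³` by AM–GM. Likewise `F_b(Q) = a p/2 + c p²/4 − b t/3` with
`(a p/2 + c p²/4)² ≥ ac p³/2 > (b t/3)²`.
-/

open Matrix

theorem Matrix.IsHermitian.trace_pow_eq_sum_eigenvalues_pow {𝕜 n : Type*} [RCLike 𝕜]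
    [Fintype n] [DecidableEq n] {A : Matrix n n 𝕜} (hA : A.IsHermitian) (k : ℕ) :
    (A ^ k).trace = ∑ i, (hA.eigenvalues i : 𝕜) ^ k := by
  conv_lhs => rw [hA.spectral_theorem, ← map_pow, Unitary.conjStarAlgAut_apply, trace_mul_cycle,
    Unitary.coe_star_mul_self, one_mul, diagonal_pow, trace_diagonal]
  rfl

theorem Matrix.IsSymm.trace_mul_self_pos {n : Type*} [Fintype n] {Q : Matrix n n ℝ}
    (hQ : Q.IsSymm) (hQ0 : Q ≠ 0) : 0 < (Q * Q).trace := by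
  have hQH : Qᴴ * Q = Q * Q := by rw [conjTranspose_eq_transpose_of_trivial, hQ.eq]
  rw [← hQH]
  exact (posSemidef_conjTranspose_mul_self Q).trace_nonneg.lt_of_ne'
    (trace_conjTranspose_mul_self_eq_zero_iff.not.mpr hQ0)

theorem six_mul_sum_cube_sq_le_sum_sq_cube {x y z : ℝ} (h : x + y + z = 0) :
    6 * (x ^ 3 + y ^ 3 + z ^ 3) ^ 2 ≤ (x ^ 2 + y ^ 2 + z ^ 2) ^ 3 := by
  obtain rfl : z = -(x + y) := by linarith
  -- the gap is twice the discriminant of the cubic with roots `x`, `y`, `-(x + y)`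
  have hgap : (x ^ 2 + y ^ 2 + (-(x + y)) ^ 2) ^ 3 - 6 * (x ^ 3 + y ^ 3 + (-(x + y)) ^ 3) ^ 2 =
      2 * ((x - y) * (x + 2 * y) * (2 * x + y)) ^ 2 := by ring
  linarith [sq_nonneg ((x - y) * (x + 2 * y) * (2 * x + y))]

theorem six_mul_trace_cube_sq_le {Q : Matrix (Fin 3) (Fin 3) ℝ} (hQ : Q.IsSymm)
    (htr : Q.trace = 0) : 6 * (Q * Q * Q).trace ^ 2 ≤ (Q * Q).trace ^ 3 := by
  have hH : Q.IsHermitian := by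
    rwa [IsHermitian, conjTranspose_eq_transpose_of_trivial]
  have htrace_pow (k : ℕ) := hH.trace_pow_eq_sum_eigenvalues_pow k
  simp only [RCLike.ofReal_real_eq_id, id, Fin.sum_univ_three] at htrace_pow
  have hsum := htrace_pow 1
  simp only [pow_one, htr] at hsum
  rw [← pow_two, ← pow_succ, htrace_pow, htrace_pow]
  exact six_mul_sum_cube_sq_le_sum_sq_cube hsum.symm

theorem sq_mul_lt_of_six_sq_le_cube {a b c p t : ℝ} (hp : 0 < p) (ht : 6 * t ^ 2 ≤ p ^ 3)
    (hdisc : b ^ 2 < 24 * a * c) : (b * t) ^ 2 < 4 * a * c * p ^ 3 := by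
  nlinarith [mul_le_mul_of_nonneg_left ht (sq_nonneg b),
    mul_lt_mul_of_pos_right hdisc (pow_pos hp 3)]

theorem trace_stationary_mul_of_trace_eq_zero {n R : Type*} [Fintype n] [DecidableEq n]
    [CommRing R] {Q : Matrix n n R} (htr : Q.trace = 0) (a b r s : R) :
    ((a • Q - b • (Q * Q - s • 1) + r • Q) * Q).trace =
      a * (Q * Q).trace - b * (Q * Q * Q).trace + r * (Q * Q).trace := by
  simp only [add_mul, sub_mul, smul_mul, one_mul, trace_add, trace_sub, trace_smul, htr,
    smul_eq_mul, mul_zero, sub_zero]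

theorem eq_zero_of_stationary {a b c : ℝ} (hdisc : b ^ 2 < 24 * a * c) {Q : Mat3}
    (hQ : Q ∈ QSet)
    (hstat :
      a • Q - b • (Q * Q - ((Q * Q).trace / 3) • (1 : Mat3)) + (c * (Q * Q).trace) • Q = 0) :
    Q = 0 := by
  obtain ⟨hsymm, htr⟩ := hQ
  by_contra hQ0
  have hbal := congrArg (fun M => (M * Q).trace) hstat
  simp only [trace_stationary_mul_of_trace_eq_zero htr, zero_mul, trace_zero] at hbal
  have hp := hsymm.trace_mul_self_pos hQ0
  have hbound := sq_mul_lt_of_six_sq_le_cube hp (six_mul_trace_cube_sq_le hsymm htr) hdisc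
  set p := (Q * Q).trace
  set t := (Q * Q * Q).trace
  have hbt : b * t = a * p + c * p ^ 2 := by linarith
  rw [hbt] at hbound
  nlinarith [sq_nonneg (a * p - c * p ^ 2)]

theorem Fb_pos_of_ne_zero {a b c : ℝ} (hc : 0 < c) (hdisc : b ^ 2 < 24 * a * c) {Q : Mat3}
    (hQ : Q ∈ QSet) (hQ0 : Q ≠ 0) : 0 < Fb a b c Q := by
  obtain ⟨hsymm, htr⟩ := hQ
  have hp := hsymm.trace_mul_self_pos hQ0
  have hbound := sq_mul_lt_of_six_sq_le_cube hp (six_mul_trace_cube_sq_le hsymm htr) hdisc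
  set p := (Q * Q).trace
  set t := (Q * Q * Q).trace
  have ha : 0 < a := by nlinarith [sq_nonneg b]
  have hsq : (b / 3 * t) ^ 2 < (a / 2 * p + c / 4 * p ^ 2) ^ 2 := by
    nlinarith [sq_nonneg (a / 2 * p - c / 4 * p ^ 2)]
  have habs := abs_lt_of_sq_lt_sq hsq (by positivity)
  unfold Fb
  linarith [le_abs_self (b / 3 * t)]

theorem stmt9_general (a b c : ℝ) (hc : 0 < c) (ha : b ^ 2 / (24 * c) < a) :
    (∀ Q ∈ QSet,
      (a • Q - b • (Q * Q - ((Q * Q).trace / 3) • (1 : Mat3)) + (c * (Q * Q).trace) • Q = 0)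
        → Q = 0) ∧
    Fb a b c 0 = 0 ∧
    (∀ Q ∈ QSet, Q ≠ 0 → 0 < Fb a b c Q) := by
  have hdisc : b ^ 2 < 24 * a * c := by
    rw [div_lt_iff₀ (by positivity)] at ha
    linarith
  exact ⟨fun Q hQ => eq_zero_of_stationary hdisc hQ, by simp [Fb],
    fun Q hQ => Fb_pos_of_ne_zero hc hdisc hQ⟩

/-- For `a > b²/(24c)`: `Q = 0` is the only symmetric traceless solution of the
stationarity equation, and `F_b(Q) > 0 = F_b(0)` for every nonzero `Q ∈ 𝒬`; in
particular `Q = 0` is the strict global minimizer of `F_b` on 𝒬. -/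
theorem stmt9 (a b c : ℝ) (hb : 0 < b) (hc : 0 < c) (ha : b ^ 2 / (24 * c) < a) :
    (∀ Q ∈ QSet,
      (a • Q - b • (Q * Q - ((Q * Q).trace / 3) • (1 : Mat3)) + (c * (Q * Q).trace) • Q = 0)
        → Q = 0) ∧
    Fb a b c 0 = 0 ∧
    (∀ Q ∈ QSet, Q ≠ 0 → 0 < Fb a b c Q) :=
  stmt9_general a b c hc ha
end
end

section
/- Let L₁, L₂, L₃ ∈ ℝ satisfy L₁ > 0, −L₁ < L₃ < 2L₁ and L₁ + (5/3)L₂ + (1/6)L₃ > 0. Then there exists c₀ > 0 such that for every array Ψ : Fin 3 × Fin 3 × Fin 3 → ℝ satisfying Ψ_{ijk} = Ψ_{jik} for all i,j,k and Σᵢ Ψ_{iik} = 0 for each k, one has L₁ Σ_{i,j,k} Ψ_{ijk}² + L₂ Σᵢ (Σⱼ Ψ_{ijj}) (Σₖ Ψ_{ikk}) + L₃ Σ_{i,j,k} Ψ_{ikj} Ψ_{ijk} ≥ c₀ Σ_{i,j,k} Ψ_{ijk}². (This is the coercivity of the Landau–de Gennes elastic energy density L₁|∇Q|² + L₂ Q_{ij,j}Q_{ik,k}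 + L₃ Q_{ik,j}Q_{ij,k} on gradients Ψ_{ijk} = Q_{ij,k} of symmetric traceless tensor fields.) -/
/-!
The forms `|Ψ|²`, `|div Ψ|²` and `T(Ψ) = Σ Ψ_{ikj} Ψ_{ijk}` are `O(3)`-invariant, and the space of
admissible `Ψ` splits into irreducible pieces of spin 1 (the trace part, determined by `div Ψ`),
spin 2 and spin 3 (the fully symmetric traceless part). On them the energy density acts by the
scalars `L₁ + 5/3 L₂ + 1/6 L₃`, `L₁ - L₃/2` and `L₁ + L₃`, so the best constant `c₀` is their
minimum. Concretely, the squared norms of the three projections are `3/5 |div Ψ|²`,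
`2/3 (|Ψ|² - T) - 1/3 |div Ψ|²` and `1/3 (|Ψ|² + 2T) - 4/15 |div Ψ|²`. The last two are
nonnegative because the antisymmetrisation `Ψ_{ijk} - Ψ_{ikj}` and the symmetrisation
`Ψ_{ijk} + Ψ_{jki} + Ψ_{kij}` dominate their own pure-trace parts, which are built from `div Ψ`;
this holds in any dimension `n` (with constants `n - 1` and `n + 2`), as one sees by expanding the
square of the difference.
-/

open Finset

namespace LandauDeGennes

variable {ι : Type*} [Fintype ι]

lemma sum_sub_mul_sq (f g : ι → ι → ι → ℝ) (t : ℝ) :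
    ∑ i, ∑ j, ∑ k, (f i j k - t * g i j k) ^ 2 =
      ∑ i, ∑ j, ∑ k, f i j k ^ 2 - 2 * t * ∑ i, ∑ j, ∑ k, f i j k * g i j k
        + t ^ 2 * ∑ i, ∑ j, ∑ k, g i j k ^ 2 := by
  simp only [sub_sq, mul_pow, sum_add_distrib, sum_sub_distrib, mul_sum]
  congr 1; congr 1
  all_goals
    exact sum_congr rfl fun _ _ => sum_congr rfl fun _ _ => sum_congr rfl fun _ _ => by ring

lemma sum_rotate {M : Type*} [AddCommMonoid M] (f : ι → ι → ι → M) :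
    ∑ i, ∑ j, ∑ k, f j k i = ∑ i, ∑ j, ∑ k, f i j k := by
  rw [sum_comm]
  exact sum_congr rfl fun _ _ => sum_comm

lemma sum_sum_mul_right (f : ι → ι → ℝ) (v : ι → ℝ) :
    ∑ i, ∑ j, f i j * v j = ∑ j, (∑ i, f i j) * v j := by
  rw [sum_comm]
  simp only [sum_mul]

def normSq (Ψ : ι → ι → ι → ℝ) : ℝ := ∑ i, ∑ j, ∑ k, Ψ i j k ^ 2

def div (Ψ : ι → ι → ι → ℝ) (i : ι) : ℝ := ∑ j, Ψ i j j

def twist (Ψ : ι → ι → ι → ℝ) : ℝ := ∑ i, ∑ j, ∑ k, Ψ i k j * Ψ i j k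

lemma sum_apply_self_self (Ψ : ι → ι → ι → ℝ) (i : ι) : ∑ j, Ψ i j j = div Ψ i := rfl

lemma sum_sq_sub_swap (Ψ : ι → ι → ι → ℝ) :
    ∑ i, ∑ j, ∑ k, (Ψ i j k - Ψ i k j) ^ 2 = 2 * normSq Ψ - 2 * twist Ψ := by
  have hsq : ∑ i, ∑ j, ∑ k, Ψ i k j ^ 2 = normSq Ψ := sum_congr rfl fun _ _ => sum_comm
  have hcross : ∑ i, ∑ j, ∑ k, Ψ i j k * Ψ i k j = twist Ψ := by
    simp only [twist, mul_comm]
  simp only [sub_sq, sum_add_distrib, sum_sub_distrib, ← mul_sum, mul_assoc, hsq, hcross]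
  unfold normSq
  ring

section Traces

variable [DecidableEq ι]

def antisymmTrace (v : ι → ℝ) (i j k : ι) : ℝ :=
  (if i = k then v j else 0) - (if i = j then v k else 0)

def symmTrace (v : ι → ℝ) (i j k : ι) : ℝ :=
  (if i = j then v k else 0) + (if j = k then v i else 0) + (if k = i then v j else 0)

lemma sum_sq_antisymmTrace (v : ι → ℝ) :
    ∑ i, ∑ j, ∑ k, antisymmTrace v i j k ^ 2 = 2 * (Fintype.card ι - 1) * ∑ i, v i ^ 2 := by
  simp only [antisymmTrace, sub_sq, ite_pow, ne_eq, OfNat.ofNat_ne_zero, not_false_eq_true,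
    zero_pow, mul_ite, mul_zero, ite_mul, mul_assoc, zero_mul, sum_add_distrib, sum_sub_distrib,
    sum_ite_eq, mem_univ, ↓reduceIte, sum_ite_irrel, sum_const_zero, ← sq, sum_const, card_univ,
    nsmul_eq_mul, ← mul_sum]
  ring

lemma sum_sq_symmTrace (v : ι → ℝ) :
    ∑ i, ∑ j, ∑ k, symmTrace v i j k ^ 2 = 3 * (Fintype.card ι + 2) * ∑ i, v i ^ 2 := by
  simp only [symmTrace, add_sq, ite_pow, ne_eq, OfNat.ofNat_ne_zero, not_false_eq_true, zero_pow,
    mul_ite, mul_zero, ite_mul, mul_assoc, zero_mul, mul_add, add_mul, sum_add_distrib,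
    sum_ite_irrel, sum_const_zero, sum_ite_eq, mem_univ, ↓reduceIte, sum_ite_eq', ← sq, sum_const,
    card_univ, nsmul_eq_mul, ← mul_sum]
  ring

end Traces

section SymmTraceless

variable {Ψ : ι → ι → ι → ℝ} (hsym : ∀ i j k, Ψ i j k = Ψ j i k)

include hsym

lemma sum_apply_self_apply (k : ι) : ∑ i, Ψ i k i = div Ψ k :=
  sum_congr rfl fun i _ => hsym i k i

lemma sum_sq_add_rotate :
    ∑ i, ∑ j, ∑ k, (Ψ i j k + Ψ j k i + Ψ k i j) ^ 2 = 3 * normSq Ψ + 6 * twist Ψ := by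
  have hcross : ∑ i, ∑ j, ∑ k, Ψ i j k * Ψ j k i = twist Ψ :=
    calc ∑ i, ∑ j, ∑ k, Ψ i j k * Ψ j k i = ∑ i, ∑ j, ∑ k, Ψ j i k * Ψ j k i :=
          sum_congr rfl fun i _ => sum_congr rfl fun j _ => sum_congr rfl fun k _ => by
            rw [hsym i j k]
      _ = twist Ψ := by rw [sum_comm]; simp only [twist, mul_comm]
  have hsq : ∑ i, ∑ j, ∑ k, Ψ j k i ^ 2 = normSq Ψ := sum_rotate fun i j k => Ψ i j k ^ 2
  have hsq' : ∑ i, ∑ j, ∑ k, Ψ k i j ^ 2 = normSq Ψ :=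
    (sum_rotate fun i j k => Ψ k i j ^ 2).symm
  have hcross' : ∑ i, ∑ j, ∑ k, Ψ j k i * Ψ k i j = twist Ψ := by
    rw [sum_rotate fun i j k => Ψ i j k * Ψ j k i]
    exact hcross
  have hcross'' : ∑ i, ∑ j, ∑ k, Ψ i j k * Ψ k i j = twist Ψ := by
    rw [← sum_rotate, ← hcross]
    exact sum_congr rfl fun _ _ => sum_congr rfl fun _ _ => sum_congr rfl fun _ _ => mul_comm _ _
  simp only [add_sq, add_mul, mul_add, sum_add_distrib, ← mul_sum, mul_assoc,
    hsq, hsq', hcross, hcross', hcross'']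
  unfold normSq
  ring

variable [DecidableEq ι] (htr : ∀ k, ∑ i, Ψ i i k = 0)

include htr

lemma sum_sub_swap_mul_antisymmTrace (v : ι → ℝ) :
    ∑ i, ∑ j, ∑ k, (Ψ i j k - Ψ i k j) * antisymmTrace v i j k = 2 * ∑ i, div Ψ i * v i := by
  simp only [antisymmTrace, mul_sub, mul_ite, sub_mul, mul_zero, sum_sub_distrib, sum_ite_eq,
    mem_univ, ↓reduceIte, sum_ite_irrel, sum_const_zero, sum_sum_mul_right,
    sum_apply_self_apply hsym, htr, zero_mul, sub_zero, zero_sub, sub_neg_eq_add]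
  ring

lemma sum_add_rotate_mul_symmTrace (v : ι → ℝ) :
    ∑ i, ∑ j, ∑ k, (Ψ i j k + Ψ j k i + Ψ k i j) * symmTrace v i j k =
      6 * ∑ i, div Ψ i * v i := by
  simp only [symmTrace, mul_add, mul_ite, add_mul, mul_zero, sum_add_distrib, sum_ite_irrel,
    sum_const_zero, sum_ite_eq, mem_univ, ↓reduceIte, sum_ite_eq', ← sum_mul, sum_apply_self_self,
    htr, zero_mul, add_zero, sum_apply_self_apply hsym, sum_sum_mul_right, zero_add]
  ring

lemma sum_div_sq_le_mul_normSq_sub_twist (hn : 1 < Fintype.card ι) :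
    ∑ i, div Ψ i ^ 2 ≤ (Fintype.card ι - 1) * (normSq Ψ - twist Ψ) := by
  set s : ℝ := Fintype.card ι - 1
  have hs : 0 < s := by
    rw [sub_pos]
    exact_mod_cast hn
  have hsos :
      0 ≤ ∑ i, ∑ j, ∑ k, (Ψ i j k - Ψ i k j - s⁻¹ * antisymmTrace (div Ψ) i j k) ^ 2 := by
    positivity
  rw [sum_sub_mul_sq (fun i j k => Ψ i j k - Ψ i k j), sum_sq_sub_swap,
    sum_sub_swap_mul_antisymmTrace hsym htr, sum_sq_antisymmTrace] at hsos
  simp only [← sq] at hsos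
  have hinv : s⁻¹ * s = 1 := inv_mul_cancel₀ hs.ne'
  linear_combination (s / 2) * hsos + (∑ i, div Ψ i ^ 2) * (s⁻¹ * s - 1) * hinv

lemma four_mul_sum_div_sq_le_mul_normSq_add_twist :
    4 * ∑ i, div Ψ i ^ 2 ≤ (Fintype.card ι + 2) * (normSq Ψ + 2 * twist Ψ) := by
  set s : ℝ := Fintype.card ι + 2
  have hs : 0 < s := by positivity
  have hsos : 0 ≤ ∑ i, ∑ j, ∑ k,
      (Ψ i j k + Ψ j k i + Ψ k i j - (2 * s⁻¹) * symmTrace (div Ψ) i j k) ^ 2 := by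
    positivity
  rw [sum_sub_mul_sq (fun i j k => Ψ i j k + Ψ j k i + Ψ k i j), sum_sq_add_rotate hsym,
    sum_add_rotate_mul_symmTrace hsym htr, sum_sq_symmTrace] at hsos
  simp only [← sq] at hsos
  have hinv : s⁻¹ * s = 1 := inv_mul_cancel₀ hs.ne'
  linear_combination (s / 3) * hsos + 4 * (∑ i, div Ψ i ^ 2) * (s⁻¹ * s - 1) * hinv

end SymmTraceless

end LandauDeGennes

theorem stmt12_general (L₁ L₂ L₃ : ℝ) (h₂ : -L₁ < L₃) (h₃ : L₃ < 2 * L₁)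
    (h₄ : 0 < L₁ + 5 / 3 * L₂ + 1 / 6 * L₃) :
    ∃ c₀ : ℝ, 0 < c₀ ∧
      ∀ Ψ : Fin 3 → Fin 3 → Fin 3 → ℝ,
        (∀ i j k, Ψ i j k = Ψ j i k) →
        (∀ k, ∑ i, Ψ i i k = 0) →
        c₀ * (∑ i, ∑ j, ∑ k, (Ψ i j k) ^ 2) ≤
          L₁ * (∑ i, ∑ j, ∑ k, (Ψ i j k) ^ 2) +
          L₂ * (∑ i, (∑ j, Ψ i j j) * (∑ k, Ψ i k k)) +
          L₃ * (∑ i, ∑ j, ∑ k, Ψ i k j * Ψ i j k) := by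
  open LandauDeGennes in
  set c₀ := min (min (L₁ + L₃) (L₁ - L₃ / 2)) (L₁ + 5 / 3 * L₂ + 1 / 6 * L₃)
  have hc₃ : c₀ ≤ L₁ + L₃ := (min_le_left _ _).trans (min_le_left _ _)
  have hc₂ : c₀ ≤ L₁ - L₃ / 2 := (min_le_left _ _).trans (min_le_right _ _)
  have hc₁ : c₀ ≤ L₁ + 5 / 3 * L₂ + 1 / 6 * L₃ := min_le_right _ _
  refine ⟨c₀, lt_min (lt_min (by linarith) (by linarith)) h₄, fun Ψ hsym htr => ?_⟩
  change c₀ * normSq Ψ ≤ L₁ * normSq Ψ + L₂ * ∑ i, div Ψ i * div Ψ i + L₃ * twist Ψ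
  simp only [← sq]
  have hspin₂ := sum_div_sq_le_mul_normSq_sub_twist hsym htr (by simp)
  have hspin₃ := four_mul_sum_div_sq_le_mul_normSq_add_twist hsym htr
  simp only [Fintype.card_fin, Nat.cast_ofNat] at hspin₂ hspin₃
  have hspin₁ : 0 ≤ ∑ i, div Ψ i ^ 2 := by positivity
  linarith [mul_nonneg (sub_nonneg.2 hc₁) hspin₁,
    mul_nonneg (sub_nonneg.2 hc₂) (sub_nonneg.2 hspin₂),
    mul_nonneg (sub_nonneg.2 hc₃) (sub_nonneg.2 hspin₃)]

/-- Coercivity of the Landau–de Gennes elastic energy density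
`L₁|∇Q|² + L₂ Q_{ij,j}Q_{ik,k} + L₃ Q_{ik,j}Q_{ij,k}` on arrays `Ψ_{ijk} = Q_{ij,k}`
that are symmetric and traceless in `(i,j)`: if `L₁ > 0`, `−L₁ < L₃ < 2L₁` and
`L₁ + (5/3)L₂ + (1/6)L₃ > 0`, then there is `c₀ > 0` with
`L₁ Σ Ψ_{ijk}² + L₂ Σᵢ (Σⱼ Ψ_{ijj})(Σₖ Ψ_{ikk}) + L₃ Σ Ψ_{ikj}Ψ_{ijk} ≥ c₀ Σ Ψ_{ijk}²`. -/
theorem stmt12 (L₁ L₂ L₃ : ℝ) (h₁ : 0 < L₁) (h₂ : -L₁ < L₃) (h₃ : L₃ < 2 * L₁)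
    (h₄ : 0 < L₁ + 5 / 3 * L₂ + 1 / 6 * L₃) :
    ∃ c₀ : ℝ, 0 < c₀ ∧
      ∀ Ψ : Fin 3 → Fin 3 → Fin 3 → ℝ,
        (∀ i j k, Ψ i j k = Ψ j i k) →
        (∀ k, ∑ i, Ψ i i k = 0) →
        c₀ * (∑ i, ∑ j, ∑ k, (Ψ i j k) ^ 2) ≤
          L₁ * (∑ i, ∑ j, ∑ k, (Ψ i j k) ^ 2) +
          L₂ * (∑ i, (∑ j, Ψ i j j) * (∑ k, Ψ i k k)) +
          L₃ * (∑ i, ∑ j, ∑ k, Ψ i k j * Ψ i j k) :=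
  stmt12_general L₁ L₂ L₃ h₂ h₃ h₄
end
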